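/- arXiv:2202.04292 — 8 statements merged into one kernel-verified Lean document; each statement's English description precedes it below -/
import Mathlib

section
/- Let K be a nonempty compact Hausdorff space and let F be a nonempty compact subset of C(K). Then (1/2)·diam(F) ≤ r_F, where diam(F) = sup{‖z₁ − z₂‖ : z₁, z₂ ∈ F}. -/
open Filter Topology MeasureTheory

/-- `r(x,B) = sup{‖x − b‖ : b ∈ B}`. -/
noncomputable def rMax {X : Type*} [NormedAddCommGroup X] (x : X) (B : Set X) : ℝ :=
  sSup ((fun b => ‖x - b‖) '' B)

/-- Restricted Chebyshev radius of `B` in `V`: `rad_V(B) = inf{r(v,B) : v ∈ V}`. -/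
noncomputable def chebRad {X : Type*} [NormedAddCommGroup X] (V B : Set X) : ℝ :=
  sInf ((fun v => rMax v B) '' V)

/-- Restricted Chebyshev centers of `B` in `V`: `{v ∈ V : r(v,B) = rad_V(B)}`. -/
def chebCent {X : Type*} [NormedAddCommGroup X] (V B : Set X) : Set X :=
  {v | v ∈ V ∧ rMax v B = chebRad V B}

/-- `diam(B) = sup{‖z₁ − z₂‖ : z₁, z₂ ∈ B}`. -/
noncomputable def setDiam {X : Type*} [NormedAddCommGroup X] (B : Set X) : ℝ :=
  sSup ((fun p : X × X => ‖p.1 - p.2‖) '' (B ×ˢ B))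

/-- `M_B(t) = sup{b(t) : b ∈ B}`. -/
noncomputable def funSup {K : Type*} [TopologicalSpace K] (B : Set C(K, ℝ)) (t : K) : ℝ :=
  sSup ((fun b : C(K, ℝ) => b t) '' B)

/-- `m_B(t) = inf{b(t) : b ∈ B}`. -/
noncomputable def funInf {K : Type*} [TopologicalSpace K] (B : Set C(K, ℝ)) (t : K) : ℝ :=
  sInf ((fun b : C(K, ℝ) => b t) '' B)

/-- `N_B(t) = limsup_{s→t} M_B(s)`. -/
noncomputable def funLimsup {K : Type*} [TopologicalSpace K] (B : Set C(K, ℝ)) (t : K) : ℝ :=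
  Filter.limsup (funSup B) (nhds t)

/-- `n_B(t) = liminf_{s→t} m_B(s)`. -/
noncomputable def funLiminf {K : Type*} [TopologicalSpace K] (B : Set C(K, ℝ)) (t : K) : ℝ :=
  Filter.liminf (funInf B) (nhds t)

/-- `r_B = (1/2)·sup{N_B(t) − n_B(t) : t ∈ K}`. -/
noncomputable def rNum {K : Type*} [TopologicalSpace K] (B : Set C(K, ℝ)) : ℝ :=
  (1 / 2) * sSup (Set.range fun t => funLimsup B t - funLiminf B t)

/-- For a nonempty compact `F ⊆ C(K)`, `(1/2)·diam(F) ≤ r_F`. -/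
theorem half_diam_le_rNum_of_isCompact {K : Type*} [TopologicalSpace K] [CompactSpace K]
    [T2Space K] [Nonempty K] (F : Set C(K, ℝ)) (hne : F.Nonempty) (hF : IsCompact F) :
    (1 / 2) * setDiam F ≤ rNum F := by
  classical
  obtain ⟨C, hC⟩ := hF.isBounded.exists_norm_le
  have hpt : ∀ f ∈ F, ∀ s : K, -C ≤ f s ∧ f s ≤ C := by
    intro f hf s
    have h1 : ‖f s‖ ≤ C := (f.norm_coe_le_norm s).trans (hC f hf)
    have := abs_le.mp (by simpa [Real.norm_eq_abs] using h1)
    exact this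
  -- bounds on funSup / funInf
  have hSle : ∀ s : K, funSup F s ≤ C := by
    intro s
    apply csSup_le (hne.image _)
    rintro x ⟨f, hf, rfl⟩
    exact (hpt f hf s).2
  have hSge : ∀ s : K, -C ≤ funSup F s := by
    intro s
    obtain ⟨f, hf⟩ := hne
    refine le_trans (hpt f hf s).1 (le_csSup ⟨C, ?_⟩ ⟨f, hf, rfl⟩)
    rintro x ⟨g, hg, rfl⟩; exact (hpt g hg s).2
  have hIle : ∀ s : K, funInf F s ≤ C := by
    intro s
    obtain ⟨f, hf⟩ := hne
    refine le_trans (csInf_le ⟨-C, ?_⟩ ⟨f, hf, rfl⟩) (hpt f hf s).2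
    rintro x ⟨g, hg, rfl⟩; exact (hpt g hg s).1
  have hIge : ∀ s : K, -C ≤ funInf F s := by
    intro s
    apply le_csInf (hne.image _)
    rintro x ⟨f, hf, rfl⟩
    exact (hpt f hf s).1
  -- boundedness of limsup/liminf values
  have hbddS : ∀ t : K, IsBoundedUnder (· ≤ ·) (nhds t) (funSup F) :=
    fun t => Filter.isBoundedUnder_of ⟨C, hSle⟩
  have hbddS' : ∀ t : K, IsBoundedUnder (· ≥ ·) (nhds t) (funSup F) :=
    fun t => Filter.isBoundedUnder_of ⟨-C, hSge⟩
  have hbddI : ∀ t : K, IsBoundedUnder (· ≥ ·) (nhds t) (funInf F) :=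
    fun t => Filter.isBoundedUnder_of ⟨-C, hIge⟩
  have hbddI' : ∀ t : K, IsBoundedUnder (· ≤ ·) (nhds t) (funInf F) :=
    fun t => Filter.isBoundedUnder_of ⟨C, hIle⟩
  have hNle : ∀ t : K, funLimsup F t ≤ C := by
    intro t
    exact Filter.limsup_le_of_le (hbddS' t).isCoboundedUnder_le (Filter.Eventually.of_forall hSle)
  have hnge : ∀ t : K, -C ≤ funLiminf F t := by
    intro t
    exact Filter.le_liminf_of_le (hbddI' t).isCoboundedUnder_ge (Filter.Eventually.of_forall hIge)
  -- sSup range bounded above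
  have hrbdd : BddAbove (Set.range fun t => funLimsup F t - funLiminf F t) := by
    refine ⟨C - (-C), ?_⟩
    rintro x ⟨t, rfl⟩
    exact sub_le_sub (hNle t) (hnge t)
  -- key per-pair estimate
  have key : ∀ z₁ ∈ F, ∀ z₂ ∈ F, ‖z₁ - z₂‖ ≤
      sSup (Set.range fun t => funLimsup F t - funLiminf F t) := by
    intro z₁ hz₁ z₂ hz₂
    obtain ⟨t, -, ht⟩ := isCompact_univ.exists_isMaxOn Set.univ_nonempty
      ((map_continuous (z₁ - z₂)).norm.continuousOn)
    have hnorm : ‖z₁ - z₂‖ ≤ ‖(z₁ - z₂) t‖ := by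
      refine (ContinuousMap.norm_le _ (norm_nonneg _)).mpr ?_
      intro s; exact ht (Set.mem_univ s)
    have habs : ‖z₁ - z₂‖ ≤ |z₁ t - z₂ t| := by
      simpa [Real.norm_eq_abs] using hnorm
    have hMm : |z₁ t - z₂ t| ≤ funSup F t - funInf F t := by
      have h1 : z₁ t ≤ funSup F t := le_csSup ⟨C, by rintro x ⟨g, hg, rfl⟩; exact (hpt g hg t).2⟩ ⟨z₁, hz₁, rfl⟩
      have h2 : z₂ t ≤ funSup F t := le_csSup ⟨C, by rintro x ⟨g, hg, rfl⟩; exact (hpt g hg t).2⟩ ⟨z₂, hz₂, rfl⟩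
      have h3 : funInf F t ≤ z₁ t := csInf_le ⟨-C, by rintro x ⟨g, hg, rfl⟩; exact (hpt g hg t).1⟩ ⟨z₁, hz₁, rfl⟩
      have h4 : funInf F t ≤ z₂ t := csInf_le ⟨-C, by rintro x ⟨g, hg, rfl⟩; exact (hpt g hg t).1⟩ ⟨z₂, hz₂, rfl⟩
      rw [abs_sub_le_iff]; constructor <;> linarith
    have hSN : funSup F t ≤ funLimsup F t := by
      refine Filter.le_limsup_of_frequently_le ?_ (hbddS t)
      have h1 : ∃ᶠ s in pure t, funSup F t ≤ funSup F s :=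
        (Filter.eventually_pure.mpr le_rfl).frequently
      exact h1.filter_mono (pure_le_nhds t)
    have hnm : funLiminf F t ≤ funInf F t := by
      refine Filter.liminf_le_of_frequently_le ?_ (hbddI t)
      have h1 : ∃ᶠ s in pure t, funInf F s ≤ funInf F t :=
        (Filter.eventually_pure.mpr le_rfl).frequently
      exact h1.filter_mono (pure_le_nhds t)
    calc ‖z₁ - z₂‖ ≤ funSup F t - funInf F t := habs.trans hMm
      _ ≤ funLimsup F t - funLiminf F t := sub_le_sub hSN hnm
      _ ≤ _ := le_csSup hrbdd ⟨t, rfl⟩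
  unfold rNum setDiam
  have hdiam : sSup ((fun p : C(K, ℝ) × C(K, ℝ) => ‖p.1 - p.2‖) '' (F ×ˢ F)) ≤
      sSup (Set.range fun t => funLimsup F t - funLiminf F t) := by
    apply csSup_le ((hne.prod hne).image _)
    rintro x ⟨⟨z₁, z₂⟩, ⟨hz₁, hz₂⟩, rfl⟩
    exact key z₁ hz₁ z₂ hz₂
  linarith
end

section
/- Let K be a nonempty compact Hausdorff space and let F be a nonempty finite subset of C(K). Then (1/2)·diam(F) = r_F, where diam(F) = sup{‖z₁ − z₂‖ : z₁, z₂ ∈ F}. -/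
open Filter Topology MeasureTheory

lemma funSup_cont {K : Type*} [TopologicalSpace K] (F : Set C(K, ℝ)) (hne : F.Nonempty)
    (hF : F.Finite) : Continuous (funSup F) := by
  have hne' : hF.toFinset.Nonempty := by rwa [Set.Finite.toFinset_nonempty]
  have : funSup F = ⇑(hF.toFinset.sup' hne' id) := by
    funext t
    rw [funSup, ContinuousMap.sup'_apply, Finset.sup'_eq_csSup_image]
    congr 1
    ext x
    simp [hF.mem_toFinset]
  rw [this]; exact (hF.toFinset.sup' hne' id).continuous

lemma funInf_cont {K : Type*} [TopologicalSpace K] (F : Set C(K, ℝ)) (hne : F.Nonempty)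
    (hF : F.Finite) : Continuous (funInf F) := by
  have hne' : hF.toFinset.Nonempty := by rwa [Set.Finite.toFinset_nonempty]
  have : funInf F = ⇑(hF.toFinset.inf' hne' id) := by
    funext t
    rw [funInf, ContinuousMap.inf'_apply, Finset.inf'_eq_csInf_image]
    congr 1
    ext x
    simp [hF.mem_toFinset]
  rw [this]; exact (hF.toFinset.inf' hne' id).continuous

/-- For a nonempty finite `F ⊆ C(K)`, `(1/2)·diam(F) = r_F`. -/
theorem half_diam_eq_rNum_of_finite {K : Type*} [TopologicalSpace K] [CompactSpace K]
    [T2Space K] [Nonempty K] (F : Set C(K, ℝ)) (hne : F.Nonempty) (hF : F.Finite) :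
    (1 / 2) * setDiam F = rNum F := by
  have hM := funSup_cont F hne hF
  have hm := funInf_cont F hne hF
  set g : K → ℝ := fun t => funSup F t - funInf F t with hg
  have hgc : Continuous g := hM.sub hm
  -- pointwise bounds
  have himg : ∀ t : K, ((fun b : C(K, ℝ) => b t) '' F).Finite := fun t => hF.image _
  have himgne : ∀ t : K, ((fun b : C(K, ℝ) => b t) '' F).Nonempty := fun t => hne.image _
  have hle : ∀ (t : K) (f : C(K, ℝ)), f ∈ F → funInf F t ≤ f t ∧ f t ≤ funSup F t := by
    intro t f hf
    constructor
    · exact csInf_le (himg t).bddBelow ⟨f, hf, rfl⟩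
    · exact le_csSup (himg t).bddAbove ⟨f, hf, rfl⟩
  have hg0 : ∀ t : K, 0 ≤ g t := by
    intro t
    obtain ⟨f, hf⟩ := hne
    have := hle t f hf
    simp only [hg]; linarith [this.1, this.2]
  -- max of g on compact K
  obtain ⟨t₀, -, hmax⟩ := isCompact_univ.exists_isMaxOn Set.univ_nonempty hgc.continuousOn
  have ht₀' : ∀ t, g t ≤ g t₀ := fun t => hmax (Set.mem_univ t)
  have hSrange : BddAbove (Set.range g) := ⟨g t₀, by rintro x ⟨t, rfl⟩; exact ht₀' t⟩
  have hS : sSup (Set.range g) = g t₀ :=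
    le_antisymm (csSup_le (Set.range_nonempty g) (by rintro x ⟨t, rfl⟩; exact ht₀' t))
      (le_csSup hSrange ⟨t₀, rfl⟩)
  -- the pair set
  set P : Set ℝ := (fun p : C(K, ℝ) × C(K, ℝ) => ‖p.1 - p.2‖) '' (F ×ˢ F) with hP
  have hPfin : P.Finite := (hF.prod hF).image _
  have hPne : P.Nonempty := (hne.prod hne).image _
  -- setDiam F = sSup (range g)
  have hdiam : setDiam F = sSup (Set.range g) := by
    rw [hS]
    apply le_antisymm
    · apply csSup_le hPne
      rintro x ⟨⟨f, h⟩, ⟨hf, hh⟩, rfl⟩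
      have h0 : (0:ℝ) ≤ g t₀ := hg0 t₀
      rw [ContinuousMap.norm_le _ h0]
      intro t
      have h1 := hle t f hf
      have h2 := hle t h hh
      have : |f t - h t| ≤ g t := by
        rw [abs_sub_le_iff]; constructor <;> simp only [hg] <;> linarith [h1.1, h1.2, h2.1, h2.2]
      calc ‖(f - h) t‖ = |f t - h t| := by simp [Real.norm_eq_abs]
        _ ≤ g t := this
        _ ≤ g t₀ := ht₀' t
    · -- g t₀ ≤ setDiam F
      have hMmem : funSup F t₀ ∈ (fun b : C(K, ℝ) => b t₀) '' F :=
        (himgne t₀).csSup_mem (himg t₀)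
      have hmmem : funInf F t₀ ∈ (fun b : C(K, ℝ) => b t₀) '' F :=
        (himgne t₀).csInf_mem (himg t₀)
      obtain ⟨f, hf, hfe⟩ := hMmem
      obtain ⟨h, hh, hhe⟩ := hmmem
      have hmemP : ‖f - h‖ ∈ P := ⟨(f, h), ⟨hf, hh⟩, rfl⟩
      calc g t₀ = f t₀ - h t₀ := by simp [hg, ← hfe, ← hhe]
        _ ≤ |f t₀ - h t₀| := le_abs_self _
        _ = ‖(f - h) t₀‖ := by simp [Real.norm_eq_abs]
        _ ≤ ‖f - h‖ := (f - h).norm_coe_le_norm t₀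
        _ ≤ setDiam F := le_csSup hPfin.bddAbove hmemP
  -- limsup/liminf collapse
  have hlimsup : ∀ t, funLimsup F t = funSup F t := fun t =>
    (hM.tendsto t).limsup_eq
  have hliminf : ∀ t, funLiminf F t = funInf F t := fun t =>
    (hm.tendsto t).liminf_eq
  rw [rNum, hdiam]
  have heq : (fun t => funLimsup F t - funLiminf F t) = g := by
    funext t; rw [hlimsup, hliminf]
  rw [heq]
end

section
/- Let K be a nonempty compact Hausdorff space, let A be a closed linear subspace of C(K), and let B be a nonempty closed bounded subset of A. Then r_B ≤ rad_A(B). -/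
open Filter Topology MeasureTheory

/-- For a closed subspace `A` of `C(K)` and a nonempty closed bounded `B ⊆ A`,
`r_B ≤ rad_A(B)`. -/
theorem rNum_le_chebRad {K : Type*} [TopologicalSpace K] [CompactSpace K] [T2Space K]
    [Nonempty K] (A : Submodule ℝ C(K, ℝ)) (hA : IsClosed (A : Set C(K, ℝ)))
    (B : Set C(K, ℝ)) (hBA : B ⊆ (A : Set C(K, ℝ))) (hne : B.Nonempty) (hcl : IsClosed B)
    (hbd : Bornology.IsBounded B) :
    rNum B ≤ chebRad (A : Set C(K, ℝ)) B := by
  obtain ⟨b₀, hb₀⟩ := hne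
  obtain ⟨C, hC⟩ := hbd.exists_norm_le
  -- main claim: for any v, rNum B ≤ rMax v B
  have key : ∀ v : C(K, ℝ), rNum B ≤ rMax v B := by
    intro v
    set r := rMax v B with hr
    have hbdd : BddAbove ((fun b => ‖v - b‖) '' B) := by
      refine ⟨‖v‖ + C, ?_⟩
      rintro _ ⟨b, hb, rfl⟩
      calc ‖v - b‖ ≤ ‖v‖ + ‖b‖ := norm_sub_le _ _
        _ ≤ ‖v‖ + C := by linarith [hC b hb]
    have hub : ∀ b ∈ B, ‖v - b‖ ≤ r := fun b hb => le_csSup hbdd ⟨b, hb, rfl⟩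
    have habs : ∀ b ∈ B, ∀ s : K, |v s - b s| ≤ r := by
      intro b hb s
      calc |v s - b s| = ‖(v - b) s‖ := by simp
        _ ≤ ‖v - b‖ := ContinuousMap.norm_coe_le_norm _ _
        _ ≤ r := hub b hb
    have hSup_le : ∀ s : K, funSup B s ≤ v s + r := by
      intro s
      refine csSup_le ⟨b₀ s, b₀, hb₀, rfl⟩ ?_
      rintro _ ⟨b, hb, rfl⟩
      have := habs b hb s
      have := abs_le.1 this
      linarith [this.1]
    have hInf_ge : ∀ s : K, v s - r ≤ funInf B s := by
      intro s
      refine le_csInf ⟨b₀ s, b₀, hb₀, rfl⟩ ?_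
      rintro _ ⟨b, hb, rfl⟩
      have := abs_le.1 (habs b hb s)
      linarith [this.2]
    have hSup_lb : ∀ s : K, -C ≤ funSup B s := by
      intro s
      have hba : BddAbove ((fun b : C(K, ℝ) => b s) '' B) := by
        refine ⟨v s + r, ?_⟩
        rintro _ ⟨b, hb, rfl⟩
        have := abs_le.1 (habs b hb s)
        linarith [this.1]
      have h1 : b₀ s ≤ funSup B s := le_csSup hba ⟨b₀, hb₀, rfl⟩
      have h2 : |b₀ s| ≤ ‖b₀‖ := by
        simpa using ContinuousMap.norm_coe_le_norm b₀ s
      have := abs_le.1 h2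
      linarith [this.1, hC b₀ hb₀]
    have hInf_lb : ∀ s : K, -C ≤ funInf B s := by
      intro s
      refine le_csInf ⟨b₀ s, b₀, hb₀, rfl⟩ ?_
      rintro _ ⟨b, hb, rfl⟩
      have h1 : |b s| ≤ ‖b‖ := by simpa using ContinuousMap.norm_coe_le_norm b s
      have := abs_le.1 h1
      linarith [this.1, hC b hb]
    -- pointwise bound on limsup/liminf
    have hpt : ∀ t : K, funLimsup B t - funLiminf B t ≤ 2 * r := by
      intro t
      have hls : funLimsup B t ≤ v t + r := by
        have h1 : Filter.limsup (fun s => v s + r) (nhds t) = v t + r :=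
          ((v.continuous.tendsto t).add_const r).limsup_eq
        have h2 : funLimsup B t ≤ Filter.limsup (fun s => v s + r) (nhds t) := by
          refine Filter.limsup_le_limsup (Filter.Eventually.of_forall hSup_le) ?_ ?_
          · exact Filter.IsBoundedUnder.isCoboundedUnder_le
              (Filter.isBoundedUnder_of ⟨-C, hSup_lb⟩)
          · exact Filter.Tendsto.isBoundedUnder_le ((v.continuous.tendsto t).add_const r)
        linarith [h1 ▸ h2]
      have hli : v t - r ≤ funLiminf B t := by
        have h1 : Filter.liminf (fun s => v s - r) (nhds t) = v t - r :=
          ((v.continuous.tendsto t).sub_const r).liminf_eq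
        have h2 : Filter.liminf (fun s => v s - r) (nhds t) ≤ funLiminf B t := by
          refine Filter.liminf_le_liminf (Filter.Eventually.of_forall hInf_ge) ?_ ?_
          · exact Filter.Tendsto.isBoundedUnder_ge ((v.continuous.tendsto t).sub_const r)
          · refine Filter.IsBoundedUnder.isCoboundedUnder_ge
              (Filter.isBoundedUnder_of ⟨C, fun s => ?_⟩)
            have h2 : |b₀ s| ≤ ‖b₀‖ := by
              simpa using ContinuousMap.norm_coe_le_norm b₀ s
            have h3 := abs_le.1 h2
            have h4 : funInf B s ≤ b₀ s := csInf_le (⟨-C, by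
              rintro _ ⟨b, hb, rfl⟩
              have h5 : |b s| ≤ ‖b‖ := by simpa using ContinuousMap.norm_coe_le_norm b s
              have := abs_le.1 h5
              linarith [this.1, hC b hb]⟩ : BddBelow ((fun b : C(K, ℝ) => b s) '' B)) ⟨b₀, hb₀, rfl⟩
            linarith [h3.2, hC b₀ hb₀]
        linarith [h1 ▸ h2]
      linarith
    have hrange : sSup (Set.range fun t => funLimsup B t - funLiminf B t) ≤ 2 * r := by
      refine Real.sSup_le ?_ ?_
      · rintro _ ⟨t, rfl⟩; exact hpt t
      · linarith [hub b₀ hb₀, norm_nonneg (v - b₀)]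
    rw [rNum]
    linarith
  -- conclude via infimum over A
  have h0 : (0 : C(K, ℝ)) ∈ (A : Set C(K, ℝ)) := A.zero_mem
  refine le_csInf ⟨rMax 0 B, 0, h0, rfl⟩ ?_
  rintro _ ⟨v, hv, rfl⟩
  exact key v
end

section
/- Let K be a compact Hausdorff space, let A be a closed linear subspace of C(K), and let B be a nonempty closed bounded subset of A such that cent_A(B) is nonempty. Then cent_A(B) = {x ∈ A : for every t ∈ K, N_B(t) − rad_A(B) ≤ x(t) ≤ n_B(t) + rad_A(B)}. -/
open Filter Topology MeasureTheory

/-- Description of the restricted Chebyshev centers of `B` in a closed subspace `A` of `C(K)`. -/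
theorem chebCent_eq_of_nonempty {K : Type*} [TopologicalSpace K] [CompactSpace K] [T2Space K]
    (A : Submodule ℝ C(K, ℝ)) (hA : IsClosed (A : Set C(K, ℝ)))
    (B : Set C(K, ℝ)) (hBA : B ⊆ (A : Set C(K, ℝ))) (hne : B.Nonempty) (hcl : IsClosed B)
    (hbd : Bornology.IsBounded B) (hc : (chebCent (A : Set C(K, ℝ)) B).Nonempty) :
    chebCent (A : Set C(K, ℝ)) B =
      {x : C(K, ℝ) | x ∈ (A : Set C(K, ℝ)) ∧ ∀ t : K,
        funLimsup B t - chebRad (A : Set C(K, ℝ)) B ≤ x t ∧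
          x t ≤ funLiminf B t + chebRad (A : Set C(K, ℝ)) B} := by

  obtain ⟨b0, hb0⟩ := id hne
  obtain ⟨C, hC⟩ := isBounded_iff_forall_norm_le.mp hbd
  set r := chebRad (A : Set C(K, ℝ)) B with hrdef
  have habs : ∀ (x b : C(K, ℝ)) (s : K), |x s - b s| ≤ ‖x - b‖ := by
    intro x b s
    simpa [Real.norm_eq_abs] using (x - b).norm_coe_le_norm s
  have hbddim : ∀ x : C(K, ℝ), BddAbove ((fun b => ‖x - b‖) '' B) := by
    intro x
    refine ⟨‖x‖ + C, ?_⟩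
    rintro _ ⟨b, hb, rfl⟩
    calc ‖x - b‖ ≤ ‖x‖ + ‖b‖ := norm_sub_le _ _
      _ ≤ ‖x‖ + C := by linarith [hC b hb]
  have hrMax_nonneg : ∀ x : C(K, ℝ), 0 ≤ rMax x B := fun x =>
    le_trans (norm_nonneg (x - b0)) (le_csSup (hbddim x) ⟨b0, hb0, rfl⟩)
  have hr_nonneg : 0 ≤ r := by
    apply Real.sInf_nonneg
    rintro _ ⟨v, hv, rfl⟩; exact hrMax_nonneg v
  have hr_le : ∀ x ∈ (A : Set C(K, ℝ)), r ≤ rMax x B := fun x hx =>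
    csInf_le ⟨0, by rintro _ ⟨v, hv, rfl⟩; exact hrMax_nonneg v⟩ ⟨x, hx, rfl⟩
  -- bounds on funSup / funInf
  have hbC : ∀ (b : C(K, ℝ)), b ∈ B → ∀ s, |b s| ≤ C := fun b hb s =>
    le_trans (by simpa [Real.norm_eq_abs] using b.norm_coe_le_norm s) (hC b hb)
  have hevB : ∀ s : K, BddAbove ((fun b : C(K, ℝ) => b s) '' B) := by
    intro s
    exact ⟨C, by rintro _ ⟨b, hb, rfl⟩; exact le_trans (le_abs_self _) (hbC b hb s)⟩
  have hevBb : ∀ s : K, BddBelow ((fun b : C(K, ℝ) => b s) '' B) := by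
    intro s
    exact ⟨-C, by rintro _ ⟨b, hb, rfl⟩; exact neg_le_of_abs_le (hbC b hb s)⟩
  have hMub : ∀ s, funSup B s ≤ C := fun s =>
    csSup_le (hne.image _) (by rintro _ ⟨b, hb, rfl⟩; exact le_trans (le_abs_self _) (hbC b hb s))
  have hMlb : ∀ s, -C ≤ funSup B s := fun s =>
    le_trans (neg_le_of_abs_le (hbC b0 hb0 s)) (le_csSup (hevB s) ⟨b0, hb0, rfl⟩)
  have hmub : ∀ s, funInf B s ≤ C := fun s =>
    le_trans (csInf_le (hevBb s) ⟨b0, hb0, rfl⟩) (le_trans (le_abs_self _) (hbC b0 hb0 s))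
  have hmlb : ∀ s, -C ≤ funInf B s := fun s =>
    le_csInf (hne.image _) (by rintro _ ⟨b, hb, rfl⟩; exact neg_le_of_abs_le (hbC b hb s))
  -- M ≤ N and n ≤ m
  have hMN : ∀ t, funSup B t ≤ funLimsup B t := by
    intro t
    refine Filter.le_limsup_of_frequently_le ?_ (Filter.isBoundedUnder_of ⟨C, hMub⟩)
    exact Filter.Frequently.filter_mono
      ((Filter.eventually_pure.mpr le_rfl : ∀ᶠ s in pure t, funSup B t ≤ funSup B s).frequently) (pure_le_nhds t)
  have hnm : ∀ t, funLiminf B t ≤ funInf B t := by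
    intro t
    refine Filter.liminf_le_of_frequently_le ?_ (Filter.isBoundedUnder_of ⟨-C, hmlb⟩)
    exact Filter.Frequently.filter_mono
      ((Filter.eventually_pure.mpr le_rfl : ∀ᶠ s in pure t, funInf B s ≤ funInf B t).frequently) (pure_le_nhds t)
  ext x
  constructor
  · rintro ⟨hxA, hxr⟩
    refine ⟨hxA, fun t => ?_⟩
    have hub : ∀ s : K, ∀ b ∈ B, |x s - b s| ≤ r := by
      intro s b hb
      calc |x s - b s| ≤ ‖x - b‖ := habs x b s
        _ ≤ rMax x B := le_csSup (hbddim x) ⟨b, hb, rfl⟩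
        _ = r := hxr
    have hM : ∀ s, funSup B s ≤ x s + r := fun s =>
      csSup_le (hne.image _)
        (by rintro _ ⟨b, hb, rfl⟩; have := abs_le.mp (hub s b hb); linarith [this.1])
    have hm : ∀ s, x s - r ≤ funInf B s := fun s =>
      le_csInf (hne.image _)
        (by rintro _ ⟨b, hb, rfl⟩; have := abs_le.mp (hub s b hb); linarith [this.2])
    constructor
    · have hten : Filter.Tendsto (fun s => x s + r) (nhds t) (nhds (x t + r)) :=
        (x.continuous.tendsto t).add_const r
      have h1 : funLimsup B t ≤ x t + r := by
        calc funLimsup B t ≤ Filter.limsup (fun s => x s + r) (nhds t) :=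
              Filter.limsup_le_limsup (Filter.Eventually.of_forall hM)
                (Filter.IsBoundedUnder.isCoboundedUnder_le
                  (Filter.isBoundedUnder_of ⟨-C, hMlb⟩))
                hten.isBoundedUnder_le
          _ = x t + r := hten.limsup_eq
      linarith
    · have hten : Filter.Tendsto (fun s => x s - r) (nhds t) (nhds (x t - r)) :=
        (x.continuous.tendsto t).sub_const r
      have h1 : x t - r ≤ funLiminf B t := by
        calc x t - r = Filter.liminf (fun s => x s - r) (nhds t) := hten.liminf_eq.symm
          _ ≤ funLiminf B t :=
              Filter.liminf_le_liminf (Filter.Eventually.of_forall hm)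
                hten.isBoundedUnder_ge
                (Filter.IsBoundedUnder.isCoboundedUnder_ge
                  (Filter.isBoundedUnder_of ⟨C, hmub⟩))
      linarith
  · rintro ⟨hxA, hx⟩
    refine ⟨hxA, le_antisymm ?_ (hr_le x hxA)⟩
    refine csSup_le (hne.image _) ?_
    rintro _ ⟨b, hb, rfl⟩
    rw [ContinuousMap.norm_le _ hr_nonneg]
    intro s
    rw [ContinuousMap.sub_apply, Real.norm_eq_abs, abs_le]
    have h1 := (hx s).1
    have h2 := (hx s).2
    have hbM : b s ≤ funSup B s := le_csSup (hevB s) ⟨b, hb, rfl⟩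
    have hbm : funInf B s ≤ b s := csInf_le (hevBb s) ⟨b, hb, rfl⟩
    exact ⟨by linarith [hMN s], by linarith [hnm s]⟩
end

section
/- Let K be a nonempty compact Hausdorff space, let D be a closed subset of K, and let J_D = {h ∈ C(K) : h(t) = 0 for all t ∈ D}. Then for every nonempty compact subset F of J_D, the set cent_{J_D}(F) is nonempty, rad_{J_D}(F) = r_F, and cent_{J_D}(F) = {h ∈ J_D : for every t ∈ K, M_F(t) − r_F ≤ h(t) ≤ m_F(t) + r_F}. -/
open Filter Topology MeasureTheory

/-!
Every `h` satisfies `M_F(t) - h(t) ≤ r(h,F)` and `h(t) - m_F(t) ≤ r(h,F)`, because `M_F(t)` and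
`m_F(t)` are attained by members of the compact set `F`; hence `r(h,F) ≥ r_F`, with equality
exactly when `h` lies in the band `M_F - r_F ≤ h ≤ m_F + r_F`. The midpoint `(M_F + m_F)/2` is
continuous (compactness of `F` again) and lies in the band, and it vanishes on `D` since every
member of `F` does. So it attains `r_F` inside `J_D`, which gives the radius and the centers.
-/

section rMax

variable {X : Type*} [NormedAddCommGroup X] {B V : Set X}

lemma norm_sub_le_rMax (hB : IsCompact B) (x : X) {b : X} (hb : b ∈ B) : ‖x - b‖ ≤ rMax x B :=
  le_csSup (hB.image (continuous_const.sub continuous_id).norm).bddAbove ⟨b, hb, rfl⟩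

lemma rMax_le (hB : B.Nonempty) {x : X} {r : ℝ} (h : ∀ b ∈ B, ‖x - b‖ ≤ r) : rMax x B ≤ r :=
  csSup_le (hB.image _) (Set.forall_mem_image.2 h)

lemma chebRad_eq_of_forall_le {c : X} {r : ℝ} (hc : c ∈ V) (hcr : rMax c B = r)
    (hle : ∀ v, r ≤ rMax v B) : chebRad V B = r :=
  le_antisymm (csInf_le ⟨r, Set.forall_mem_image.2 fun v _ => hle v⟩ ⟨c, hc, hcr⟩)
    (le_csInf ⟨_, c, hc, rfl⟩ (Set.forall_mem_image.2 fun v _ => hle v))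

end rMax

section funSup

variable {K : Type*} [TopologicalSpace K] {F : Set C(K, ℝ)}

lemma exists_apply_eq_funSup (hF : IsCompact F) (hne : F.Nonempty) (t : K) :
    ∃ z ∈ F, z t = funSup F t :=
  (hF.image (continuous_eval_const t)).sSup_mem (hne.image _)

lemma exists_apply_eq_funInf (hF : IsCompact F) (hne : F.Nonempty) (t : K) :
    ∃ z ∈ F, z t = funInf F t :=
  (hF.image (continuous_eval_const t)).sInf_mem (hne.image _)

lemma apply_le_funSup (hF : IsCompact F) {z : C(K, ℝ)} (hz : z ∈ F) (t : K) :
    z t ≤ funSup F t :=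
  le_csSup (hF.image (continuous_eval_const t)).bddAbove ⟨z, hz, rfl⟩

lemma funInf_le_apply (hF : IsCompact F) {z : C(K, ℝ)} (hz : z ∈ F) (t : K) :
    funInf F t ≤ z t :=
  csInf_le (hF.image (continuous_eval_const t)).bddBelow ⟨z, hz, rfl⟩

/-- `r_F = (1/2)·sup{M_F(t) − m_F(t) : t ∈ K}`. -/
noncomputable def halfOsc (F : Set C(K, ℝ)) : ℝ :=
  (1 / 2) * sSup (Set.range fun t => funSup F t - funInf F t)

def chebBand (F : Set C(K, ℝ)) : Set C(K, ℝ) :=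
  {h | ∀ t, funSup F t - halfOsc F ≤ h t ∧ h t ≤ funInf F t + halfOsc F}

end funSup

section CompactSpace

variable {K : Type*} [TopologicalSpace K] [CompactSpace K] {F : Set C(K, ℝ)}

lemma continuous_funSup (hF : IsCompact F) : Continuous (funSup F) :=
  hF.continuous_sSup (f := fun t z => z t) (continuous_eval.comp continuous_swap)

lemma continuous_funInf (hF : IsCompact F) : Continuous (funInf F) :=
  hF.continuous_sInf (f := fun t z => z t) (continuous_eval.comp continuous_swap)

noncomputable def midFun (hF : IsCompact F) : C(K, ℝ) :=
  ⟨fun t => (funSup F t + funInf F t) / 2,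
    ((continuous_funSup hF).add (continuous_funInf hF)).div_const 2⟩

lemma midFun_apply_eq_zero (hF : IsCompact F) (hne : F.Nonempty) {t : K}
    (ht : ∀ z ∈ F, z t = 0) : midFun hF t = 0 := by
  obtain ⟨zM, hzM, hM⟩ := exists_apply_eq_funSup hF hne t
  obtain ⟨zm, hzm, hm⟩ := exists_apply_eq_funInf hF hne t
  simp [midFun, ← hM, ← hm, ht zM hzM, ht zm hzm]

lemma funSup_sub_funInf_le (hF : IsCompact F) (t : K) :
    funSup F t - funInf F t ≤ 2 * halfOsc F := by
  have hbdd : BddAbove (Set.range fun t => funSup F t - funInf F t) :=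
    (isCompact_range ((continuous_funSup hF).sub (continuous_funInf hF))).bddAbove
  have := le_csSup hbdd ⟨t, rfl⟩
  unfold halfOsc
  linarith

lemma funSup_sub_le_rMax (hF : IsCompact F) (hne : F.Nonempty) (h : C(K, ℝ)) (t : K) :
    funSup F t - h t ≤ rMax h F := by
  obtain ⟨z, hz, hzt⟩ := exists_apply_eq_funSup hF hne t
  calc funSup F t - h t = -(h - z) t := by simp [← hzt]
    _ ≤ ‖h - z‖ := neg_le.1 ((h - z).neg_norm_le_apply t)
    _ ≤ rMax h F := norm_sub_le_rMax hF h hz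

lemma sub_funInf_le_rMax (hF : IsCompact F) (hne : F.Nonempty) (h : C(K, ℝ)) (t : K) :
    h t - funInf F t ≤ rMax h F := by
  obtain ⟨z, hz, hzt⟩ := exists_apply_eq_funInf hF hne t
  calc h t - funInf F t = (h - z) t := by simp [← hzt]
    _ ≤ ‖h - z‖ := (h - z).apply_le_norm t
    _ ≤ rMax h F := norm_sub_le_rMax hF h hz

lemma midFun_mem_chebBand (hF : IsCompact F) : midFun hF ∈ chebBand F := fun t => by
  have := funSup_sub_funInf_le hF t
  simp only [midFun, ContinuousMap.coe_mk]
  constructor <;> linarith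

variable [Nonempty K]

lemma halfOsc_le_rMax (hF : IsCompact F) (hne : F.Nonempty) (h : C(K, ℝ)) :
    halfOsc F ≤ rMax h F := by
  have : sSup (Set.range fun t => funSup F t - funInf F t) ≤ 2 * rMax h F :=
    csSup_le (Set.range_nonempty _) <| Set.forall_mem_range.2 fun t => by
      linarith [funSup_sub_le_rMax hF hne h t, sub_funInf_le_rMax hF hne h t]
  unfold halfOsc
  linarith

lemma rMax_le_halfOsc_of_mem_chebBand (hF : IsCompact F) (hne : F.Nonempty) {h : C(K, ℝ)}
    (hh : h ∈ chebBand F) : rMax h F ≤ halfOsc F :=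
  rMax_le hne fun z hz => (ContinuousMap.norm_le_of_nonempty _).2 fun t => by
    have := apply_le_funSup hF hz t
    have := funInf_le_apply hF hz t
    rw [ContinuousMap.sub_apply, Real.norm_eq_abs, abs_le]
    constructor <;> linarith [hh t]

lemma rMax_eq_halfOsc_iff (hF : IsCompact F) (hne : F.Nonempty) (h : C(K, ℝ)) :
    rMax h F = halfOsc F ↔ h ∈ chebBand F := by
  refine ⟨fun hr t => ?_, fun hh =>
    le_antisymm (rMax_le_halfOsc_of_mem_chebBand hF hne hh) (halfOsc_le_rMax hF hne h)⟩
  have := funSup_sub_le_rMax hF hne h t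
  have := sub_funInf_le_rMax hF hne h t
  constructor <;> linarith

theorem chebRad_eq_halfOsc_and_chebCent_eq (hF : IsCompact F) (hne : F.Nonempty)
    {V : Set C(K, ℝ)} (hV : midFun hF ∈ V) :
    chebRad V F = halfOsc F ∧ chebCent V F = V ∩ chebBand F := by
  have hrad : chebRad V F = halfOsc F :=
    chebRad_eq_of_forall_le hV ((rMax_eq_halfOsc_iff hF hne _).2 (midFun_mem_chebBand hF))
      (halfOsc_le_rMax hF hne)
  refine ⟨hrad, Set.ext fun h => ?_⟩
  simp only [chebCent, hrad, Set.mem_ofPred_eq, Set.mem_inter_iff, rMax_eq_halfOsc_iff hF hne]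

end CompactSpace

theorem chebCent_JD_of_isCompact_general {K : Type*} [TopologicalSpace K] [CompactSpace K]
    [Nonempty K] (D : Set K)
    (F : Set C(K, ℝ)) (hFJ : F ⊆ {h : C(K, ℝ) | ∀ t ∈ D, h t = 0})
    (hne : F.Nonempty) (hF : IsCompact F) :
    (chebCent {h : C(K, ℝ) | ∀ t ∈ D, h t = 0} F).Nonempty ∧
      chebRad {h : C(K, ℝ) | ∀ t ∈ D, h t = 0} F
        = (1 / 2) * sSup (Set.range fun t => funSup F t - funInf F t) ∧
      chebCent {h : C(K, ℝ) | ∀ t ∈ D, h t = 0} F =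
        {h : C(K, ℝ) | (∀ t ∈ D, h t = 0) ∧ ∀ t : K,
          funSup F t - (1 / 2) * sSup (Set.range fun s => funSup F s - funInf F s) ≤ h t ∧
            h t ≤ funInf F t + (1 / 2) * sSup (Set.range fun s => funSup F s - funInf F s)} := by
  have hmid : midFun hF ∈ {h : C(K, ℝ) | ∀ t ∈ D, h t = 0} := fun t ht =>
    midFun_apply_eq_zero hF hne fun z hz => hFJ hz t ht
  obtain ⟨hrad, hcent⟩ := chebRad_eq_halfOsc_and_chebCent_eq hF hne hmid
  exact ⟨hcent ▸ ⟨midFun hF, hmid, midFun_mem_chebBand hF⟩, hrad, hcent⟩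

/-- Chebyshev centers of compact subsets of `J_D = {h ∈ C(K) : h|_D = 0}` for closed `D`. -/
theorem chebCent_JD_of_isCompact {K : Type*} [TopologicalSpace K] [CompactSpace K] [T2Space K]
    [Nonempty K] (D : Set K) (hD : IsClosed D)
    (F : Set C(K, ℝ)) (hFJ : F ⊆ {h : C(K, ℝ) | ∀ t ∈ D, h t = 0})
    (hne : F.Nonempty) (hF : IsCompact F) :
    (chebCent {h : C(K, ℝ) | ∀ t ∈ D, h t = 0} F).Nonempty ∧
      chebRad {h : C(K, ℝ) | ∀ t ∈ D, h t = 0} F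
        = (1 / 2) * sSup (Set.range fun t => funSup F t - funInf F t) ∧
      chebCent {h : C(K, ℝ) | ∀ t ∈ D, h t = 0} F =
        {h : C(K, ℝ) | (∀ t ∈ D, h t = 0) ∧ ∀ t : K,
          funSup F t - (1 / 2) * sSup (Set.range fun s => funSup F s - funInf F s) ≤ h t ∧
            h t ≤ funInf F t + (1 / 2) * sSup (Set.range fun s => funSup F s - funInf F s)} :=
  chebCent_JD_of_isCompact_general D F hFJ hne hF
end

section
/- Let X be a real Banach space that is an L₁-predual, and let F be a nonempty compact subset of X. Then cent_X(F) is nonempty and rad_X(F) = (1/2)·diam(F), where diam(F) = sup{‖y − y′‖ : y, y′ ∈ F}. -/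
open Filter Topology MeasureTheory

universe u

/-- `X` is an `L₁`-predual: its dual is linearly isometric to some `L¹(μ)`. -/
def IsL1Predual (X : Type*) [NormedAddCommGroup X] [NormedSpace ℝ X] : Prop :=
  ∃ (Ω : Type u) (_ : MeasurableSpace Ω) (μ : Measure Ω),
    Nonempty (StrongDual ℝ X ≃ₗᵢ[ℝ] Lp ℝ 1 μ)

/-- pointwise flow coefficients -/
noncomputable def hflow {n : ℕ} (a : Fin n → ℝ) (i j : Fin n) : ℝ :=
  (max (a i) 0 * max (-a j) 0 - max (-a i) 0 * max (a j) 0) / (∑ k, max (a k) 0)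

lemma hflow_antisymm {n : ℕ} (a : Fin n → ℝ) (i j : Fin n) :
    hflow a j i = - hflow a i j := by
  unfold hflow; ring

lemma max_sub_max {x : ℝ} : max x 0 - max (-x) 0 = x := by
  rcases le_total x 0 with h | h
  · rw [max_eq_right h, max_eq_left (by linarith)]; ring
  · rw [max_eq_left h, max_eq_right (by linarith)]; ring

lemma pos_eq_neg_sum {n : ℕ} {a : Fin n → ℝ} (ha : ∑ i, a i = 0) :
    ∑ k, max (a k) 0 = ∑ k, max (-a k) 0 := by
  have h2 : ∑ k, (max (a k) 0 - max (-a k) 0) = 0 := by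
    simp only [max_sub_max, ha]
  rw [Finset.sum_sub_distrib] at h2
  linarith

lemma sum_hflow {n : ℕ} {a : Fin n → ℝ} (ha : ∑ i, a i = 0) (i : Fin n) :
    ∑ j, hflow a i j = a i := by
  set S := ∑ k, max (a k) 0 with hS
  have hM := pos_eq_neg_sum ha
  rcases eq_or_ne S 0 with h0 | h0
  · have hz : ∀ k, max (a k) 0 = 0 :=
      fun k => (Finset.sum_eq_zero_iff_of_nonneg (fun k _ => le_max_right (a k) 0)).mp
        (hS ▸ h0) k (Finset.mem_univ k)
    have hz' : ∀ k, max (-a k) 0 = 0 :=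
      fun k => (Finset.sum_eq_zero_iff_of_nonneg (fun k _ => le_max_right (-a k) 0)).mp
        (by rw [← hM, ← hS]; exact h0) k (Finset.mem_univ k)
    have hai : a i = 0 := by have := @max_sub_max (a i); rw [hz i, hz' i] at this; linarith
    simp only [hflow, ← hS, h0, div_zero, Finset.sum_const, smul_zero, hai]
  · have key : ∑ j, hflow a i j
        = (∑ j, (max (a i) 0 * max (-a j) 0 - max (-a i) 0 * max (a j) 0)) / S := by
      simp only [hflow, ← hS]
      rw [← Finset.sum_div]
    rw [key, Finset.sum_sub_distrib, ← Finset.mul_sum, ← Finset.mul_sum, ← hM, ← hS]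
    rw [← sub_mul, max_sub_max, mul_div_assoc, div_self h0, mul_one]

lemma sum_abs_hflow {n : ℕ} {a : Fin n → ℝ} (ha : ∑ i, a i = 0) (i : Fin n) :
    ∑ j, |hflow a i j| ≤ |a i| := by
  set S := ∑ k, max (a k) 0 with hS
  have hM := pos_eq_neg_sum ha
  have hSnn : 0 ≤ S := Finset.sum_nonneg fun k _ => le_max_right _ _
  have habs : |a i| = max (a i) 0 + max (-a i) 0 := by
    rcases le_total (a i) 0 with h | h
    · rw [abs_of_nonpos h, max_eq_right h, max_eq_left (by linarith)]; ring
    · rw [abs_of_nonneg h, max_eq_left h, max_eq_right (by linarith)]; ring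
  rcases eq_or_ne S 0 with h0 | h0
  · simp only [hflow, ← hS, h0, div_zero, abs_zero, Finset.sum_const, smul_zero]
    exact abs_nonneg _
  · have hSpos : 0 < S := lt_of_le_of_ne hSnn (Ne.symm h0)
    have hb : ∀ j, |hflow a i j|
        ≤ (max (a i) 0 * max (-a j) 0 + max (-a i) 0 * max (a j) 0) / S := by
      intro j
      rw [hflow, ← hS, abs_div, abs_of_pos hSpos]
      gcongr
      exact (abs_sub _ _).trans (by
          rw [abs_mul, abs_mul,
            abs_of_nonneg (le_max_right _ _), abs_of_nonneg (le_max_right _ _),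
            abs_of_nonneg (le_max_right _ _), abs_of_nonneg (le_max_right _ _)])
    calc ∑ j, |hflow a i j|
        ≤ ∑ j, (max (a i) 0 * max (-a j) 0 + max (-a i) 0 * max (a j) 0) / S :=
          Finset.sum_le_sum fun j _ => hb j
      _ = (max (a i) 0 * S + max (-a i) 0 * S) / S := by
          rw [← Finset.sum_div]; congr 1
          rw [Finset.sum_add_distrib, ← Finset.mul_sum, ← Finset.mul_sum, ← hM, ← hS]
      _ = |a i| := by
          rw [habs, ← add_mul, mul_div_assoc, div_self h0, mul_one]

lemma lp_coeFn_sum {Ω : Type*} [MeasurableSpace Ω] {μ : Measure Ω} {ι : Type*}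
    (s : Finset ι) (f : ι → Lp ℝ 1 μ) :
    ⇑(∑ i ∈ s, f i) =ᵐ[μ] fun ω => ∑ i ∈ s, f i ω := by
  classical
  induction s using Finset.induction with
  | empty => simp only [Finset.sum_empty]; exact Lp.coeFn_zero ℝ 1 μ
  | insert _ _ hx ih =>
    rename_i a s
    rw [Finset.sum_insert hx]
    filter_upwards [Lp.coeFn_add (f a) (∑ i ∈ s, f i), ih] with ω h1 h2
    rw [Finset.sum_insert hx, h1, Pi.add_apply, h2]

lemma l1_decomp {X : Type*} [NormedAddCommGroup X] [NormedSpace ℝ X]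
    {Ω : Type*} [MeasurableSpace Ω] {μ : Measure Ω}
    (e : StrongDual ℝ X ≃ₗᵢ[ℝ] Lp ℝ 1 μ) {n : ℕ}
    (F : Fin n → StrongDual ℝ X) (hF : ∑ i, F i = 0) :
    ∃ H : Fin n → Fin n → StrongDual ℝ X,
      (∀ i j, H j i = - H i j) ∧ (∀ i, ∑ j, H i j = F i) ∧
        (∀ i, ∑ j, ‖H i j‖ ≤ ‖F i‖) := by
  classical
  set g : Fin n → Ω → ℝ := fun i => ⇑(e (F i)) with hg
  have hsum0 : (∑ i, e (F i)) = 0 := by rw [← map_sum, hF, map_zero]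
  have hae : ∀ᵐ ω ∂μ, ∑ i, g i ω = 0 := by
    filter_upwards [lp_coeFn_sum Finset.univ (fun i => e (F i)),
      Lp.coeFn_zero ℝ 1 μ] with ω h1 h2
    simp only [hg]
    rw [← h1, hsum0]
    simpa using h2
  -- pointwise flows
  set h : Fin n → Fin n → Ω → ℝ := fun i j ω => hflow (fun k => g k ω) i j with hh
  have hmeas : ∀ i j, AEStronglyMeasurable (h i j) μ := by
    intro i j
    have hgm : ∀ k, AEMeasurable (g k) μ := fun k => (Lp.aestronglyMeasurable _).aemeasurable
    have : AEMeasurable (h i j) μ := by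
      apply AEMeasurable.div
      · exact (((hgm i).max aemeasurable_const).mul ((hgm j).neg.max aemeasurable_const)).sub
          (((hgm i).neg.max aemeasurable_const).mul ((hgm j).max aemeasurable_const))
      · exact Finset.aemeasurable_fun_sum _ fun k _ => (hgm k).max aemeasurable_const
    exact this.aestronglyMeasurable
  have hbound : ∀ i j, ∀ᵐ ω ∂μ, ‖h i j ω‖ ≤ ‖g i ω‖ := by
    intro i j
    filter_upwards [hae] with ω h0
    rw [Real.norm_eq_abs, Real.norm_eq_abs]
    calc |h i j ω| ≤ ∑ j', |hflow (fun k => g k ω) i j'| :=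
          Finset.single_le_sum (f := fun j' => |hflow (fun k => g k ω) i j'|)
            (fun j' _ => abs_nonneg _) (Finset.mem_univ j)
      _ ≤ |g i ω| := sum_abs_hflow h0 i
  have hmem : ∀ i j, MemLp (h i j) 1 μ := fun i j =>
    MemLp.of_le (Lp.memLp (e (F i))) (hmeas i j) (hbound i j)
  set HL : Fin n → Fin n → Lp ℝ 1 μ := fun i j => (hmem i j).toLp with hHL
  have hLanti : ∀ i j, HL j i = - HL i j := by
    intro i j
    apply Lp.ext
    filter_upwards [MemLp.coeFn_toLp (hmem j i), MemLp.coeFn_toLp (hmem i j),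
      Lp.coeFn_neg (HL i j)] with ω h1 h2 h3
    rw [h1, h3, Pi.neg_apply, h2]
    exact hflow_antisymm _ i j
  have hLsum : ∀ i, ∑ j, HL i j = e (F i) := by
    intro i
    apply Lp.ext
    have hcoe : ∀ᵐ ω ∂μ, ∀ j, HL i j ω = h i j ω := by
      rw [MeasureTheory.ae_all_iff]
      exact fun j => MemLp.coeFn_toLp (hmem i j)
    filter_upwards [lp_coeFn_sum Finset.univ (fun j => HL i j), hae, hcoe] with ω h1 h2 h3
    rw [h1]
    simp only [h3]
    exact sum_hflow h2 i
  have hnorm : ∀ i j, ‖HL i j‖ = ∫ ω, |h i j ω| ∂μ := by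
    intro i j
    rw [L1.norm_eq_integral_norm]
    apply integral_congr_ae
    filter_upwards [MemLp.coeFn_toLp (hmem i j)] with ω h1
    rw [h1, Real.norm_eq_abs]
  have hint : ∀ i j, Integrable (h i j) μ := fun i j => (memLp_one_iff_integrable).mp (hmem i j)
  have hnormsum : ∀ i, ∑ j, ‖HL i j‖ ≤ ‖F i‖ := by
    intro i
    rw [← e.norm_map (F i), L1.norm_eq_integral_norm]
    calc ∑ j, ‖HL i j‖ = ∑ j, ∫ ω, |h i j ω| ∂μ := by simp only [hnorm]
      _ = ∫ ω, ∑ j, |h i j ω| ∂μ :=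
          (integral_finset_sum Finset.univ (fun j _ => (hint i j).abs)).symm
      _ ≤ ∫ ω, ‖g i ω‖ ∂μ := by
          apply integral_mono_ae
          · exact integrable_finset_sum Finset.univ (fun j _ => (hint i j).abs)
          · exact (L1.integrable_coeFn (e (F i))).norm
          · filter_upwards [hae] with ω h0
            calc ∑ j, |h i j ω| ≤ |g i ω| := sum_abs_hflow h0 i
              _ ≤ ‖g i ω‖ := le_of_eq (Real.norm_eq_abs _).symm
      _ = ∫ ω, ‖(e (F i)) ω‖ ∂μ := rfl
  refine ⟨fun i j => e.symm (HL i j), fun i j => ?_, fun i => ?_, fun i => ?_⟩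
  · show e.symm (HL j i) = - e.symm (HL i j)
    rw [hLanti i j, map_neg]
  · show ∑ j, e.symm (HL i j) = F i
    rw [← map_sum, hLsum i, e.symm_apply_apply]
  · show ∑ j, ‖e.symm (HL i j)‖ ≤ ‖F i‖
    have : ∀ j, ‖e.symm (HL i j)‖ = ‖HL i j‖ := fun j => e.symm.norm_map _
    simp only [this]
    exact hnormsum i

/-- Separation: if the enlarged balls have empty intersection, there are simplex
weights witnessing it. -/
lemma separation_lemma {X : Type*} [NormedAddCommGroup X] [NormedSpace ℝ X]
    {n : ℕ} (hn : 0 < n) (y : Fin n → X) (r : Fin n → ℝ) {ε : ℝ} (hε : 0 < ε)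
    (hempty : ¬ ∃ x : X, ∀ i, ‖x - y i‖ ≤ r i + ε) :
    ∃ lam : Fin n → ℝ, (∀ i, 0 ≤ lam i) ∧ (∑ i, lam i = 1) ∧
      ∀ x : X, (∑ i, lam i * r i) + ε ≤ ∑ i, lam i * ‖x - y i‖ := by
  classical
  set A : Set (Fin n → ℝ) := {a | ∃ x : X, ∀ i, ‖x - y i‖ < a i} with hA
  have hAconv : Convex ℝ A := by
    rintro a ⟨x, hx⟩ b ⟨z, hz⟩ s t hs ht hst
    refine ⟨s • x + t • z, fun i => ?_⟩
    have h1 : s • (x - y i) + t • (z - y i) = (s • x + t • z) - (s + t) • (y i) := by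
      module
    rw [hst, one_smul] at h1
    show ‖(s • x + t • z) - y i‖ < (s • a + t • b) i
    rw [← h1]
    have hb : ‖s • (x - y i) + t • (z - y i)‖ ≤ s * ‖x - y i‖ + t * ‖z - y i‖ := by
      refine (norm_add_le _ _).trans ?_
      rw [norm_smul, norm_smul, Real.norm_eq_abs, Real.norm_eq_abs,
        abs_of_nonneg hs, abs_of_nonneg ht]
    have hstrict : s * ‖x - y i‖ + t * ‖z - y i‖ < s * a i + t * b i := by
      rcases hs.lt_or_eq with hs0 | hs0
      · have u1 : s * ‖x - y i‖ < s * a i := mul_lt_mul_of_pos_left (hx i) hs0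
        have u2 : t * ‖z - y i‖ ≤ t * b i := mul_le_mul_of_nonneg_left (hz i).le ht
        linarith
      · have ht0 : 0 < t := by linarith
        have u2 : t * ‖z - y i‖ < t * b i := mul_lt_mul_of_pos_left (hz i) ht0
        have u1 : s * ‖x - y i‖ ≤ s * a i := by rw [← hs0]; simp
        linarith
    have : (s • a + t • b) i = s * a i + t * b i := by simp
    rw [this]
    linarith
  have hAopen : IsOpen A := by
    have : A = ⋃ x : X, ⋂ i : Fin n, (fun a : Fin n → ℝ => a i) ⁻¹' (Set.Ioi ‖x - y i‖) := by
      ext a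
      simp only [Set.mem_iUnion, Set.mem_iInter, Set.mem_preimage, Set.mem_Ioi, hA,
        Set.mem_setOf_eq]
    rw [this]
    exact isOpen_iUnion fun x => isOpen_iInter_of_finite fun i =>
      (isOpen_Ioi).preimage (continuous_apply i)
  have hcnotin : (fun i => r i + ε) ∉ A := by
    rintro ⟨x, hx⟩
    exact hempty ⟨x, fun i => (hx i).le⟩
  obtain ⟨f, hf⟩ := geometric_hahn_banach_open_point hAconv hAopen hcnotin
  set μ : Fin n → ℝ := fun i => f (Pi.single i 1 : Fin n → ℝ) with hμ
  have hμdef : ∀ i, f (Pi.single i 1 : Fin n → ℝ) = μ i := fun i => by rw [hμ]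
  have hfval : ∀ a : Fin n → ℝ, f a = ∑ i, a i * μ i := by
    intro a
    have ha : a = ∑ i, a i • (Pi.single i 1 : Fin n → ℝ) := by
      ext j
      simp [Pi.single_apply]
    calc f a = f (∑ i, a i • (Pi.single i 1 : Fin n → ℝ)) := by rw [← ha]
      _ = ∑ i, a i * μ i := by
          rw [map_sum]
          exact Finset.sum_congr rfl fun i _ => by rw [_root_.map_smul, smul_eq_mul, hμdef]
  -- a point of A
  have ha0 : (fun i => ‖y ⟨0, hn⟩ - y i‖ + 1) ∈ A := by
    refine ⟨y ⟨0, hn⟩, fun i => ?_⟩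
    show ‖y ⟨0, hn⟩ - y i‖ < ‖y ⟨0, hn⟩ - y i‖ + 1
    linarith
  set a0 : Fin n → ℝ := fun i => ‖y ⟨0, hn⟩ - y i‖ + 1 with ha0def
  -- A is upward closed
  have hup : ∀ a ∈ A, ∀ b : Fin n → ℝ, (∀ i, a i ≤ b i) → b ∈ A := by
    rintro a ⟨x, hx⟩ b hab
    exact ⟨x, fun i => lt_of_lt_of_le (hx i) (hab i)⟩
  have hμnonpos : ∀ i, μ i ≤ 0 := by
    intro i
    by_contra hpos
    push_neg at hpos
    set c : ℝ := f (fun j => r j + ε) with hc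
    set t : ℝ := max ((c - f a0) / μ i) 0 + 1 with ht
    clear_value t
    have htnn : (0:ℝ) ≤ t := by
      rw [ht]
      have := le_max_right ((c - f a0) / μ i) (0:ℝ)
      linarith
    have hmem : (a0 + t • (Pi.single i 1 : Fin n → ℝ)) ∈ A := by
      apply hup a0 ha0
      intro j
      simp only [Pi.add_apply, Pi.smul_apply, smul_eq_mul]
      have hnn : (0:ℝ) ≤ (Pi.single i 1 : Fin n → ℝ) j := by
        rcases eq_or_ne j i with h | h
        · subst h; rw [Pi.single_eq_same]; norm_num
        · rw [Pi.single_eq_of_ne h]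
      nlinarith [mul_nonneg htnn hnn]
    have hlt := hf _ hmem
    rw [map_add, _root_.map_smul, smul_eq_mul, hμdef] at hlt
    -- hlt : f a0 + t * μ i < c
    have h1 : (c - f a0) / μ i ≤ max ((c - f a0) / μ i) 0 := le_max_left _ _
    have h2 : c - f a0 ≤ max ((c - f a0) / μ i) 0 * μ i := (div_le_iff₀ hpos).mp h1
    have h3 : t * μ i = max ((c - f a0) / μ i) 0 * μ i + μ i := by rw [ht]; ring
    linarith
  set lam : Fin n → ℝ := fun i => -μ i with hlam
  have hlamnn : ∀ i, 0 ≤ lam i := fun i => by simpa [hlam] using hμnonpos i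
  have hlamsumpos : 0 < ∑ i, lam i := by
    rcases lt_or_eq_of_le (Finset.sum_nonneg fun i _ => hlamnn i) with h | h
    · exact h
    · exfalso
      have hall : ∀ i, lam i = 0 := fun i =>
        (Finset.sum_eq_zero_iff_of_nonneg fun i _ => hlamnn i).mp h.symm i (Finset.mem_univ i)
      have hf0 : ∀ a : Fin n → ℝ, f a = 0 := by
        intro a
        rw [hfval]
        apply Finset.sum_eq_zero
        intro i _
        have hμ0 : μ i = 0 := by have := hall i; simp [hlam] at this; linarith
        rw [hμ0, mul_zero]
      have := hf a0 ha0
      rw [hf0, hf0] at this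
      exact lt_irrefl _ this
  have hneg : ∀ (c : Fin n → ℝ), ∑ i, c i * μ i = -∑ i, lam i * c i := by
    intro c
    rw [← Finset.sum_neg_distrib]
    exact Finset.sum_congr rfl fun i _ => by simp [hlam]; ring
  -- key inequality before normalization
  have hkey : ∀ x : X, ∑ i, lam i * (r i + ε) ≤ ∑ i, lam i * ‖x - y i‖ := by
    intro x
    have hlimit : ∀ s : ℝ, 0 < s →
        ∑ i, lam i * (r i + ε) < ∑ i, lam i * (‖x - y i‖ + s) := by
      intro s hs
      have hmem : (fun i => ‖x - y i‖ + s) ∈ A := ⟨x, fun i => by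
        show ‖x - y i‖ < ‖x - y i‖ + s
        linarith⟩
      have := hf _ hmem
      rw [hfval, hfval, hneg, hneg] at this
      linarith
    by_contra hcon
    push_neg at hcon
    set δ : ℝ := (∑ i, lam i * (r i + ε)) - ∑ i, lam i * ‖x - y i‖ with hδ
    have hδpos : 0 < δ := by simp only [hδ, sub_pos]; exact hcon
    have hl := hlimit (δ / (2 * (∑ i, lam i))) (by positivity)
    have hexpand : ∑ i, lam i * (‖x - y i‖ + δ / (2 * (∑ i, lam i)))
        = (∑ i, lam i * ‖x - y i‖) + δ / 2 := by
      rw [Finset.sum_congr rfl (fun i _ => mul_add (lam i) (‖x - y i‖) _),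
        Finset.sum_add_distrib, ← Finset.sum_mul]
      congr 1
      field_simp
    rw [hexpand] at hl
    have : δ ≤ δ / 2 := by linarith [hδ ▸ hl]
    linarith
  -- normalize
  set L : ℝ := ∑ i, lam i with hL
  refine ⟨fun i => lam i / L, fun i => div_nonneg (hlamnn i) hlamsumpos.le, ?_, ?_⟩
  · rw [← Finset.sum_div, ← hL, div_self (ne_of_gt hlamsumpos)]
  · intro x
    have hkx := hkey x
    have hsum : ∑ i, lam i * (r i + ε) = (∑ i, lam i * r i) + ε * L := by
      rw [Finset.sum_congr rfl (fun i _ => mul_add (lam i) (r i) ε), Finset.sum_add_distrib]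
      congr 1
      rw [← Finset.sum_mul, ← hL]
      ring
    rw [hsum] at hkx
    have e1 : ∑ i, (lam i / L) * r i = (∑ i, lam i * r i) / L := by
      rw [Finset.sum_div]
      exact Finset.sum_congr rfl fun i _ => by ring
    have e2 : ∑ i, (lam i / L) * ‖x - y i‖ = (∑ i, lam i * ‖x - y i‖) / L := by
      rw [Finset.sum_div]
      exact Finset.sum_congr rfl fun i _ => by ring
    rw [e1, e2]
    have hdiv : ((∑ i, lam i * r i) + ε * L) / L ≤ (∑ i, lam i * ‖x - y i‖) / L := by
      gcongr
    calc (∑ i, lam i * r i) / L + ε = ((∑ i, lam i * r i) + ε * L) / L := by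
          field_simp
      _ ≤ (∑ i, lam i * ‖x - y i‖) / L := hdiv

lemma hb_lemma {X : Type*} [NormedAddCommGroup X] [NormedSpace ℝ X] {n : ℕ}
    (y : Fin n → X) (lam : Fin n → ℝ) (hlam : ∀ i, 0 ≤ lam i) (m : ℝ)
    (hm : ∀ x : X, m ≤ ∑ i, lam i * ‖x - y i‖) :
    ∃ G : Fin n → StrongDual ℝ X, (∀ i, ‖G i‖ ≤ lam i) ∧ (∑ i, G i = 0) ∧
      m ≤ ∑ i, (G i) (y i) := by
  classical
  rcases le_or_gt m 0 with hm0 | hm0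
  · refine ⟨fun _ => 0, fun i => by simp [hlam i], by simp, by simpa using hm0⟩
  rcases Nat.eq_zero_or_pos n with hn | hn
  · exfalso
    have := hm 0
    subst hn
    simp at this
    linarith
  -- the linear map π : X × ℝ → (Fin n → X)
  set π : (X × ℝ) →ₗ[ℝ] (Fin n → X) :=
    { toFun := fun p => fun i => p.1 - p.2 • y i
      map_add' := by
        intro p q
        funext i
        show (p.1 + q.1) - (p.2 + q.2) • y i = (p.1 - p.2 • y i) + (q.1 - q.2 • y i)
        rw [add_smul]
        abel
      map_smul' := by
        intro c p
        funext i
        show (c • p.1) - (c * p.2) • y i = c • (p.1 - p.2 • y i)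
        rw [smul_sub, mul_smul] } with hπ
  set g : (X × ℝ) →ₗ[ℝ] ℝ := m • (LinearMap.snd ℝ X ℝ) with hg
  have hπapp : ∀ p : X × ℝ, ∀ i, π p i = p.1 - p.2 • y i := fun p i => rfl
  have hgapp : ∀ p : X × ℝ, g p = m * p.2 := fun p => by
    simp [hg, LinearMap.snd_apply, smul_eq_mul]
  have hker : LinearMap.ker π ≤ LinearMap.ker g := by
    intro p hp
    rw [LinearMap.mem_ker] at hp ⊢
    rw [hgapp]
    rcases eq_or_ne p.2 0 with h2 | h2
    · rw [h2, mul_zero]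
    · exfalso
      have hall : ∀ i, p.1 - p.2 • y i = 0 := fun i => by
        rw [← hπapp p i, hp]; rfl
      have hx : ∀ i, (p.2⁻¹ • p.1) - y i = 0 := fun i => by
        have := congrArg (fun z => p.2⁻¹ • z) (hall i)
        simpa [smul_sub, smul_smul, inv_mul_cancel₀ h2] using this
      have := hm (p.2⁻¹ • p.1)
      have hz : ∑ i, lam i * ‖(p.2⁻¹ • p.1) - y i‖ = 0 := by
        apply Finset.sum_eq_zero
        intro i _
        rw [hx i, norm_zero, mul_zero]
      rw [hz] at this
      linarith
  set φ : ↥(LinearMap.range π) →ₗ[ℝ] ℝ :=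
    ((LinearMap.ker π).liftQ g hker).comp π.quotKerEquivRange.symm.toLinearMap with hφ
  have hφapp : ∀ p : X × ℝ, ∀ hmem : π p ∈ LinearMap.range π,
      φ ⟨π p, hmem⟩ = m * p.2 := by
    intro p hmem
    have h1 : π.quotKerEquivRange (Submodule.Quotient.mk p) = ⟨π p, hmem⟩ := by
      apply Subtype.ext
      exact LinearMap.quotKerEquivRange_apply_mk π p
    have h2 : π.quotKerEquivRange.symm ⟨π p, hmem⟩ = Submodule.Quotient.mk p := by
      rw [LinearEquiv.symm_apply_eq, h1]
    rw [hφ, LinearMap.comp_apply, LinearEquiv.coe_toLinearMap, h2, Submodule.liftQ_apply,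
      hgapp]
  set N : (Fin n → X) → ℝ := fun u => ∑ i, lam i * ‖u i‖ with hN
  have hNnn : ∀ u, 0 ≤ N u := fun u =>
    Finset.sum_nonneg fun i _ => mul_nonneg (hlam i) (norm_nonneg _)
  have N_hom : ∀ c : ℝ, 0 < c → ∀ u, N (c • u) = c * N u := by
    intro c hc u
    rw [hN, Finset.mul_sum]
    apply Finset.sum_congr rfl
    intro i _
    show lam i * ‖c • u i‖ = c * (lam i * ‖u i‖)
    rw [norm_smul, Real.norm_eq_abs, abs_of_pos hc]
    ring
  have N_add : ∀ u v, N (u + v) ≤ N u + N v := by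
    intro u v
    rw [hN, ← Finset.sum_add_distrib]
    apply Finset.sum_le_sum
    intro i _
    show lam i * ‖u i + v i‖ ≤ lam i * ‖u i‖ + lam i * ‖v i‖
    rw [← mul_add]
    exact mul_le_mul_of_nonneg_left (norm_add_le _ _) (hlam i)
  have hle : ∀ v : ↥(LinearPMap.domain ⟨LinearMap.range π, φ⟩),
      (⟨LinearMap.range π, φ⟩ : (Fin n → X) →ₗ.[ℝ] ℝ) v ≤ N v := by
    rintro ⟨v, hv⟩
    obtain ⟨p, hp⟩ := hv
    have hv' : v ∈ LinearMap.range π := ⟨p, hp⟩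
    have : (⟨LinearMap.range π, φ⟩ : (Fin n → X) →ₗ.[ℝ] ℝ) ⟨v, hv'⟩ = φ ⟨v, hv'⟩ := rfl
    rw [this]
    have heq : (⟨v, hv'⟩ : ↥(LinearMap.range π)) = ⟨π p, LinearMap.mem_range_self π p⟩ := Subtype.ext hp.symm
    rw [heq, hφapp p]
    show m * p.2 ≤ N (π p)
    rcases lt_trichotomy p.2 0 with h2 | h2 | h2
    · have : m * p.2 < 0 := mul_neg_of_pos_of_neg hm0 h2
      linarith [hNnn (π p)]
    · rw [h2, mul_zero]; exact hNnn (π p)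
    · have hNpi : N (π p) = p.2 * ∑ i, lam i * ‖(p.2⁻¹ • p.1) - y i‖ := by
        rw [hN, Finset.mul_sum]
        apply Finset.sum_congr rfl
        intro i _
        have : π p i = p.2 • ((p.2⁻¹ • p.1) - y i) := by
          rw [hπapp, smul_sub, smul_smul, mul_inv_cancel₀ (ne_of_gt h2), one_smul]
        rw [this, norm_smul, Real.norm_eq_abs, abs_of_pos h2]
        ring
      rw [hNpi]
      calc m * p.2 = p.2 * m := mul_comm _ _
        _ ≤ p.2 * ∑ i, lam i * ‖(p.2⁻¹ • p.1) - y i‖ :=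
            mul_le_mul_of_nonneg_left (hm _) h2.le
  obtain ⟨G0, hG0ext, hG0le⟩ :=
    exists_extension_of_le_sublinear ⟨LinearMap.range π, φ⟩ N N_hom N_add hle
  -- the coordinate functionals
  have hbound : ∀ i (x : X), ‖G0 (Pi.single i x)‖ ≤ lam i * ‖x‖ := by
    intro i x
    have hsingle : ∀ (x : X), N (Pi.single i x) = lam i * ‖x‖ := by
      intro x
      show ∑ j, lam j * ‖(Pi.single i x : Fin n → X) j‖ = lam i * ‖x‖
      rw [Finset.sum_eq_single i]
      · rw [Pi.single_eq_same]
      · intro j _ hj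
        rw [Pi.single_eq_of_ne hj, norm_zero, mul_zero]
      · intro h; exact absurd (Finset.mem_univ i) h
    rw [Real.norm_eq_abs, abs_le]
    constructor
    · have := hG0le (Pi.single i (-x) : Fin n → X)
      rw [hsingle, norm_neg] at this
      have hneg : (Pi.single i (-x) : Fin n → X) = -Pi.single i x := by
        funext j
        rcases eq_or_ne j i with h | h
        · subst h; simp
        · simp [Pi.single_eq_of_ne h]
      rw [hneg, map_neg] at this
      linarith
    · have := hG0le (Pi.single i x)
      rw [hsingle] at this
      exact this
  set Gl : Fin n → (X →ₗ[ℝ] ℝ) := fun i => G0 ∘ₗ (LinearMap.single ℝ (fun _ => X) i) with hGl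
  have hGlapp : ∀ i x, Gl i x = G0 (Pi.single i x) := fun i x => rfl
  set G : Fin n → StrongDual ℝ X := fun i =>
    -((Gl i).mkContinuous (lam i) (fun x => by rw [hGlapp]; exact hbound i x)) with hG2
  have hGapp : ∀ i x, G i x = -G0 (Pi.single i x) := fun i x => rfl
  refine ⟨G, ?_, ?_, ?_⟩
  · intro i
    rw [hG2]
    calc ‖-((Gl i).mkContinuous (lam i) _)‖ = ‖(Gl i).mkContinuous (lam i) _‖ := norm_neg _
      _ ≤ lam i := LinearMap.mkContinuous_norm_le _ (hlam i) _
  · ext x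
    have hsum : ∑ i, Pi.single i x = (fun _ : Fin n => x) := by
      have := Finset.univ_sum_single (fun _ : Fin n => x)
      simpa using this
    have hmem : (fun _ : Fin n => x) ∈ LinearMap.range π := ⟨(x, 0), by
      funext i
      rw [hπapp]
      simp⟩
    have hG0diag : G0 (fun _ : Fin n => x) = 0 := by
      have h1 := hG0ext ⟨(fun _ : Fin n => x), hmem⟩
      have h2 : (⟨LinearMap.range π, φ⟩ : (Fin n → X) →ₗ.[ℝ] ℝ)
          ⟨(fun _ : Fin n => x), hmem⟩ = φ ⟨(fun _ : Fin n => x), hmem⟩ := rfl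
      have h3 : ((x, 0) : X × ℝ).1 = x := rfl
      have heq : (⟨(fun _ : Fin n => x), hmem⟩ : ↥(LinearMap.range π))
          = ⟨π (x, 0), LinearMap.mem_range_self π (x, 0)⟩ := by
        apply Subtype.ext
        show (fun _ : Fin n => x) = π (x, 0)
        funext i
        show x = π (x, 0) i
        rw [hπapp]
        simp
      rw [h1, h2, heq, hφapp (x, 0)]
      simp
    show (∑ i, G i) x = (0 : StrongDual ℝ X) x
    rw [ContinuousLinearMap.sum_apply]
    have : ∑ i, G i x = -G0 (∑ i, Pi.single i x) := by
      rw [map_sum, ← Finset.sum_neg_distrib]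
      exact Finset.sum_congr rfl fun i _ => hGapp i x
    rw [this, hsum, hG0diag]
    simp
  · have hmem : (fun i : Fin n => y i) ∈ LinearMap.range π := ⟨(0, -1), by
      funext i
      rw [hπapp]
      simp⟩
    have hG0y : G0 (fun i : Fin n => y i) = -m := by
      have h1 := hG0ext ⟨(fun i : Fin n => y i), hmem⟩
      have h2 : (⟨LinearMap.range π, φ⟩ : (Fin n → X) →ₗ.[ℝ] ℝ)
          ⟨(fun i : Fin n => y i), hmem⟩ = φ ⟨(fun i : Fin n => y i), hmem⟩ := rfl
      have heq : (⟨(fun i : Fin n => y i), hmem⟩ : ↥(LinearMap.range π))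
          = ⟨π (0, -1), LinearMap.mem_range_self π (0, -1)⟩ := by
        apply Subtype.ext
        show (fun i : Fin n => y i) = π (0, -1)
        funext i
        show y i = π (0, -1) i
        rw [hπapp]
        simp
      rw [h1, h2, heq, hφapp (0, -1)]
      simp
    have hsumy : ∑ i, Pi.single i (y i) = (fun i : Fin n => y i) :=
      Finset.univ_sum_single (fun i : Fin n => y i)
    have : ∑ i, G i (y i) = -G0 (∑ i, Pi.single i (y i)) := by
      rw [map_sum, ← Finset.sum_neg_distrib]
      exact Finset.sum_congr rfl fun i _ => hGapp i (y i)
    rw [this, hsumy, hG0y, neg_neg]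

lemma finite_balls {X : Type*} [NormedAddCommGroup X] [NormedSpace ℝ X]
    (hX : IsL1Predual.{u} X) {n : ℕ} (hn : 0 < n) (y : Fin n → X) (r : Fin n → ℝ)
    (hr : ∀ i, 0 ≤ r i) (hpair : ∀ i j, ‖y i - y j‖ ≤ r i + r j)
    {ε : ℝ} (hε : 0 < ε) :
    ∃ x : X, ∀ i, ‖x - y i‖ ≤ r i + ε := by
  by_contra hempty
  obtain ⟨lam, hlamnn, hlamsum, hsep⟩ := separation_lemma hn y r hε hempty
  obtain ⟨G, hGnorm, hGsum, hGval⟩ :=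
    hb_lemma y lam hlamnn ((∑ i, lam i * r i) + ε) hsep
  obtain ⟨Ω, _, μ, ⟨e⟩⟩ := hX
  obtain ⟨H, hanti, hrow, hnorm⟩ := l1_decomp e G hGsum
  set T : ℝ := ∑ i, ∑ j, (H i j) (y i) with hT
  have hTval : (∑ i, lam i * r i) + ε ≤ T := by
    rw [hT]
    refine hGval.trans (le_of_eq ?_)
    apply Finset.sum_congr rfl
    intro i _
    rw [← hrow i, ContinuousLinearMap.sum_apply]
  have hT2 : ∑ i, ∑ j, (H i j) (y j) = - T := by
    calc ∑ i, ∑ j, (H i j) (y j) = ∑ j, ∑ i, (H i j) (y j) := Finset.sum_comm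
      _ = ∑ j, ∑ i, -((H j i) (y j)) := by
          refine Finset.sum_congr rfl fun j _ => Finset.sum_congr rfl fun i _ => ?_
          rw [hanti j i, ContinuousLinearMap.neg_apply]
      _ = - T := by
          rw [hT, ← Finset.sum_neg_distrib]
          exact Finset.sum_congr rfl fun j _ => by rw [← Finset.sum_neg_distrib]
  have h2T : 2 * T = ∑ i, ∑ j, (H i j) (y i - y j) := by
    have : ∑ i, ∑ j, (H i j) (y i - y j)
        = (∑ i, ∑ j, (H i j) (y i)) - ∑ i, ∑ j, (H i j) (y j) := by
      rw [← Finset.sum_sub_distrib]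
      refine Finset.sum_congr rfl fun i _ => ?_
      rw [← Finset.sum_sub_distrib]
      exact Finset.sum_congr rfl fun j _ => by rw [map_sub]
    rw [this, hT2, ← hT]
    ring
  have hbound : ∑ i, ∑ j, (H i j) (y i - y j) ≤ ∑ i, ∑ j, ‖H i j‖ * (r i + r j) := by
    refine Finset.sum_le_sum fun i _ => Finset.sum_le_sum fun j _ => ?_
    calc (H i j) (y i - y j) ≤ ‖(H i j) (y i - y j)‖ := Real.le_norm_self _
      _ ≤ ‖H i j‖ * ‖y i - y j‖ := ContinuousLinearMap.le_opNorm _ _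
      _ ≤ ‖H i j‖ * (r i + r j) :=
          mul_le_mul_of_nonneg_left (hpair i j) (norm_nonneg _)
  have hswap : ∑ i, ∑ j, ‖H i j‖ * r j = ∑ i, ∑ j, ‖H i j‖ * r i := by
    calc ∑ i, ∑ j, ‖H i j‖ * r j = ∑ j, ∑ i, ‖H i j‖ * r j := Finset.sum_comm
      _ = ∑ j, ∑ i, ‖H j i‖ * r j := by
          refine Finset.sum_congr rfl fun j _ => Finset.sum_congr rfl fun i _ => ?_
          rw [hanti j i, norm_neg]
      _ = ∑ i, ∑ j, ‖H i j‖ * r i := rfl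
  have hfinal : ∑ i, ∑ j, ‖H i j‖ * (r i + r j) ≤ 2 * ∑ i, lam i * r i := by
    have hsplit : ∑ i, ∑ j, ‖H i j‖ * (r i + r j)
        = (∑ i, ∑ j, ‖H i j‖ * r i) + ∑ i, ∑ j, ‖H i j‖ * r j := by
      rw [← Finset.sum_add_distrib]
      refine Finset.sum_congr rfl fun i _ => ?_
      rw [← Finset.sum_add_distrib]
      exact Finset.sum_congr rfl fun j _ => by ring
    rw [hsplit, hswap]
    have hone : ∑ i, ∑ j, ‖H i j‖ * r i ≤ ∑ i, lam i * r i := by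
      refine Finset.sum_le_sum fun i _ => ?_
      rw [← Finset.sum_mul]
      calc (∑ j, ‖H i j‖) * r i ≤ ‖G i‖ * r i :=
            mul_le_mul_of_nonneg_right (hnorm i) (hr i)
        _ ≤ lam i * r i := mul_le_mul_of_nonneg_right (hGnorm i) (hr i)
    linarith
  linarith [hTval, h2T ▸ (hbound.trans hfinal)]

/-- In an `L₁`-predual space, every nonempty compact set has a Chebyshev center and its
Chebyshev radius is half its diameter. -/
theorem chebCent_nonempty_of_isL1Predual {X : Type*} [NormedAddCommGroup X] [NormedSpace ℝ X]
    [CompleteSpace X] (hX : IsL1Predual X) (F : Set X) (hne : F.Nonempty)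
    (hF : IsCompact F) :
    (chebCent (Set.univ : Set X) F).Nonempty ∧
      chebRad (Set.univ : Set X) F = (1 / 2) * setDiam F := by
  classical
  obtain ⟨y0, hy0⟩ := hne
  obtain ⟨C, hC⟩ := Metric.isBounded_iff.mp hF.isBounded
  have hCnorm : ∀ z ∈ F, ∀ z' ∈ F, ‖z - z'‖ ≤ C := fun z hz z' hz' => by
    rw [← dist_eq_norm]; exact hC hz hz'
  -- diameter facts
  have hdiam_bdd : BddAbove ((fun p : X × X => ‖p.1 - p.2‖) '' (F ×ˢ F)) := by
    refine ⟨C, ?_⟩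
    rintro _ ⟨⟨z, z'⟩, ⟨hz, hz'⟩, rfl⟩
    exact hCnorm z hz z' hz'
  have hdiam_le : ∀ z ∈ F, ∀ z' ∈ F, ‖z - z'‖ ≤ setDiam F := fun z hz z' hz' =>
    le_csSup hdiam_bdd ⟨(z, z'), ⟨hz, hz'⟩, rfl⟩
  have hdiam_nonneg : 0 ≤ setDiam F := by
    have := hdiam_le y0 hy0 y0 hy0
    rw [sub_self, norm_zero] at this
    exact this
  set s : ℝ := setDiam F / 2 with hs
  have hs_nonneg : 0 ≤ s := by positivity
  have h2s : setDiam F = 2 * s := by rw [hs]; ring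
  -- rMax facts
  have hrMax_bdd : ∀ v : X, BddAbove ((fun b => ‖v - b‖) '' F) := by
    intro v
    refine ⟨‖v - y0‖ + C, ?_⟩
    rintro _ ⟨b, hb, rfl⟩
    calc ‖v - b‖ ≤ ‖v - y0‖ + ‖y0 - b‖ := norm_sub_le_norm_sub_add_norm_sub _ _ _
      _ ≤ ‖v - y0‖ + C := by linarith [hCnorm y0 hy0 b hb]
  have hrMax_ge : ∀ v : X, s ≤ rMax v F := by
    intro v
    have h1 : setDiam F ≤ 2 * rMax v F := by
      apply csSup_le (Set.Nonempty.image _ (Set.Nonempty.prod ⟨y0, hy0⟩ ⟨y0, hy0⟩))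
      rintro _ ⟨⟨z, z'⟩, ⟨hz, hz'⟩, rfl⟩
      have h2 : ‖v - z‖ ≤ rMax v F := le_csSup (hrMax_bdd v) ⟨z, hz, rfl⟩
      have h3 : ‖v - z'‖ ≤ rMax v F := le_csSup (hrMax_bdd v) ⟨z', hz', rfl⟩
      calc ‖z - z'‖ ≤ ‖z - v‖ + ‖v - z'‖ := norm_sub_le_norm_sub_add_norm_sub _ _ _
        _ = ‖v - z‖ + ‖v - z'‖ := by rw [norm_sub_rev]
        _ ≤ 2 * rMax v F := by linarith
    rw [hs]
    linarith
  -- the approximation step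
  have happrox : ∀ β : ℝ, 0 ≤ β → ∀ x₀ : X, (∀ z ∈ F, ‖x₀ - z‖ ≤ s + β) →
      ∀ ε : ℝ, 0 < ε → ∃ x' : X, (∀ z ∈ F, ‖x' - z‖ ≤ s + ε) ∧ ‖x' - x₀‖ ≤ β + ε := by
    intro β hβ x₀ hx₀ ε hε
    set δ : ℝ := ε / 2 with hδ
    have hδpos : 0 < δ := by positivity
    obtain ⟨t, hts, htfin, htcov⟩ :=
      Metric.finite_approx_of_totallyBounded hF.totallyBounded δ hδpos
    set tf : Finset X := htfin.toFinset with htf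
    have htf_mem : ∀ w, w ∈ tf ↔ w ∈ t := fun w => htfin.mem_toFinset
    set k : ℕ := tf.card with hk
    set Y : Fin (k + 1) → X := Fin.cons x₀ (fun i => (tf.equivFin.symm i : X)) with hY
    set R : Fin (k + 1) → ℝ := Fin.cons β (fun _ => s) with hR
    have hYmem : ∀ i : Fin k, (Y i.succ) ∈ F := by
      intro i
      have : Y i.succ = (tf.equivFin.symm i : X) := by rw [hY, Fin.cons_succ]
      rw [this]
      exact hts ((htf_mem _).mp (tf.equivFin.symm i).2)
    have hr : ∀ i, 0 ≤ R i := by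
      intro i
      refine Fin.cases ?_ ?_ i
      · rw [hR, Fin.cons_zero]; exact hβ
      · intro j; rw [hR, Fin.cons_succ]; exact hs_nonneg
    have hpair : ∀ i j, ‖Y i - Y j‖ ≤ R i + R j := by
      intro i j
      refine Fin.cases ?_ ?_ i
      · refine Fin.cases ?_ ?_ j
        · rw [sub_self, norm_zero]
          linarith [hr 0]
        · intro j'
          rw [hY, hR, Fin.cons_zero, Fin.cons_succ, Fin.cons_zero, Fin.cons_succ]
          have := hx₀ _ (hYmem j')
          rw [hY, Fin.cons_succ] at this
          linarith
      · intro i'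
        refine Fin.cases ?_ ?_ j
        · rw [hY, hR, Fin.cons_zero, Fin.cons_succ, Fin.cons_zero, Fin.cons_succ,
            norm_sub_rev]
          have := hx₀ _ (hYmem i')
          rw [hY, Fin.cons_succ] at this
          linarith
        · intro j'
          rw [hY, hR, Fin.cons_succ, Fin.cons_succ, Fin.cons_succ, Fin.cons_succ]
          have h1 := hdiam_le _ (hYmem i') _ (hYmem j')
          rw [hY, Fin.cons_succ, Fin.cons_succ] at h1
          rw [h2s] at h1
          linarith
    obtain ⟨x', hx'⟩ := finite_balls hX (Nat.succ_pos k) Y R hr hpair hδpos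
    refine ⟨x', ?_, ?_⟩
    · intro z hz
      obtain ⟨w, hw, hzw⟩ := Set.mem_iUnion₂.mp (htcov hz)
      have hwf : w ∈ tf := (htf_mem w).mpr hw
      set i : Fin k := tf.equivFin ⟨w, hwf⟩ with hi
      have hYi : Y i.succ = w := by
        rw [hY, Fin.cons_succ, hi, Equiv.symm_apply_apply]
      have h1 := hx' i.succ
      rw [hYi, hR, Fin.cons_succ] at h1
      have h2 : ‖w - z‖ < δ := by
        rw [← dist_eq_norm, dist_comm]
        exact Metric.mem_ball.mp hzw
      calc ‖x' - z‖ ≤ ‖x' - w‖ + ‖w - z‖ := norm_sub_le_norm_sub_add_norm_sub _ _ _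
        _ ≤ (s + δ) + δ := by linarith
        _ = s + ε := by rw [hδ]; ring
    · have h1 := hx' 0
      rw [hY, hR, Fin.cons_zero, Fin.cons_zero] at h1
      have : δ ≤ ε := by rw [hδ]; linarith
      linarith
  -- build a Cauchy sequence
  set P : ℕ → X → Prop := fun n x => ∀ z ∈ F, ‖x - z‖ ≤ s + (1/2 : ℝ) ^ n with hP
  have hbase : ∃ x, P 0 x := by
    obtain ⟨x', hx', _⟩ := happrox s hs_nonneg y0
      (fun z hz => by
        have := hdiam_le y0 hy0 z hz
        rw [h2s] at this
        linarith) 1 one_pos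
    exact ⟨x', by simpa [hP] using hx'⟩
  have hrec : ∀ n (x : X), P n x → ∃ x', P (n+1) x' ∧
      ‖x' - x‖ ≤ (1/2 : ℝ) ^ n + (1/2 : ℝ) ^ (n+1) := by
    intro n x hx
    obtain ⟨x', h1, h2⟩ := happrox ((1/2 : ℝ) ^ n) (by positivity) x hx
      ((1/2 : ℝ) ^ (n+1)) (by positivity)
    exact ⟨x', h1, h2⟩
  obtain ⟨x0, hx0⟩ := hbase
  let useq : (n : ℕ) → {x : X // P n x} := fun n =>
    Nat.rec ⟨x0, hx0⟩
      (fun k xk => ⟨Classical.choose (hrec k xk.1 xk.2),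
        (Classical.choose_spec (hrec k xk.1 xk.2)).1⟩) n
  set xs : ℕ → X := fun n => (useq n).1 with hxs
  have hdist : ∀ n, ‖xs (n+1) - xs n‖ ≤ (1/2 : ℝ) ^ n + (1/2 : ℝ) ^ (n+1) := by
    intro n
    exact (Classical.choose_spec (hrec n (useq n).1 (useq n).2)).2
  have hcauchy : CauchySeq xs := by
    apply cauchySeq_of_le_geometric (1/2 : ℝ) 2 (by norm_num)
    intro n
    rw [dist_eq_norm, norm_sub_rev]
    calc ‖xs (n+1) - xs n‖ ≤ (1/2 : ℝ) ^ n + (1/2 : ℝ) ^ (n+1) := hdist n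
      _ ≤ 2 * (1/2 : ℝ) ^ n := by
          have : (1/2 : ℝ) ^ (n+1) ≤ (1/2 : ℝ) ^ n :=
            pow_le_pow_of_le_one (by norm_num) (by norm_num) (Nat.le_succ n)
          linarith
  obtain ⟨xinf, hxinf⟩ := cauchySeq_tendsto_of_complete hcauchy
  have hfin : ∀ z ∈ F, ‖xinf - z‖ ≤ s := by
    intro z hz
    have h1 : Tendsto (fun n => ‖xs n - z‖) atTop (𝓝 ‖xinf - z‖) :=
      ((hxinf.sub tendsto_const_nhds).norm)
    have h2 : Tendsto (fun n : ℕ => s + (1/2 : ℝ) ^ n) atTop (𝓝 s) := by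
      have := tendsto_pow_atTop_nhds_zero_of_lt_one (by norm_num : (0:ℝ) ≤ 1/2)
        (by norm_num : (1/2 : ℝ) < 1)
      have h3 := (tendsto_const_nhds (x := s) (f := atTop (α := ℕ))).add this
      simpa using h3
    exact le_of_tendsto_of_tendsto' h1 h2 (fun n => (useq n).2 z hz)
  -- conclude
  have hrMax_le : rMax xinf F ≤ s := by
    apply csSup_le (Set.Nonempty.image _ ⟨y0, hy0⟩)
    rintro _ ⟨b, hb, rfl⟩
    exact hfin b hb
  have hrMax_eq : rMax xinf F = s := le_antisymm hrMax_le (hrMax_ge xinf)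
  have hcheb_bdd : BddBelow ((fun v => rMax v F) '' (Set.univ : Set X)) := by
    refine ⟨s, ?_⟩
    rintro _ ⟨v, -, rfl⟩
    exact hrMax_ge v
  have hcheb_le : chebRad (Set.univ : Set X) F ≤ s := by
    have := csInf_le hcheb_bdd ⟨xinf, Set.mem_univ _, hrMax_eq⟩
    exact this
  have hcheb_ge : s ≤ chebRad (Set.univ : Set X) F := by
    apply le_csInf (Set.Nonempty.image _ ⟨xinf, Set.mem_univ _⟩)
    rintro _ ⟨v, -, rfl⟩
    exact hrMax_ge v
  have hcheb_eq : chebRad (Set.univ : Set X) F = s := le_antisymm hcheb_le hcheb_ge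
  constructor
  · exact ⟨xinf, Set.mem_univ _, by rw [hrMax_eq, hcheb_eq]⟩
  · rw [hcheb_eq, hs]; ring
end

section
/- Let X = ℝ² equipped with the supremum norm ‖(s,t)‖ = max{|s|,|t|}. Let F = {(−1,0), (1,0)} and G = {(0,1)}. Then cent_X(F) = {(0,λ) : −1 ≤ λ ≤ 1}, cent_X(G) = {(0,1)}, d_H(F,G) = 1, and d_H(cent_X(F), cent_X(G)) = 2. In particular, the constant 2 in the 2-Lipschitz continuity of the Chebyshev-center map on compact sets is best possible. -/
open Filter Topology MeasureTheory

lemma rMax_pair {X : Type*} [NormedAddCommGroup X] (x a b : X) :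
    rMax x {a, b} = max ‖x - a‖ ‖x - b‖ := by
  simp [rMax, Set.image_insert_eq, Set.image_singleton, csSup_pair]

lemma rMax_single {X : Type*} [NormedAddCommGroup X] (x a : X) :
    rMax x {a} = ‖x - a‖ := by
  simp [rMax]

lemma rMaxF (p : ℝ × ℝ) :
    rMax p {((-1 : ℝ), (0 : ℝ)), ((1 : ℝ), (0 : ℝ))}
      = max (max |p.1 + 1| |p.2|) (max |p.1 - 1| |p.2|) := by
  rw [rMax_pair]
  simp [Prod.norm_def, Real.norm_eq_abs, sub_neg_eq_add]

lemma rMaxF_ge (p : ℝ × ℝ) :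
    (1 : ℝ) ≤ max (max |p.1 + 1| |p.2|) (max |p.1 - 1| |p.2|) := by
  rcases le_total p.1 0 with h | h
  · exact le_max_of_le_right (le_max_of_le_left (by rw [abs_sub_comm]; rw [abs_of_nonneg (by linarith)]; linarith))
  · exact le_max_of_le_left (le_max_of_le_left (by rw [abs_of_nonneg (by linarith)]; linarith))

lemma chebRadF :
    chebRad (Set.univ : Set (ℝ × ℝ)) {((-1 : ℝ), (0 : ℝ)), ((1 : ℝ), (0 : ℝ))} = 1 := by
  unfold chebRad
  rw [Set.image_univ]
  apply le_antisymm
  · have : rMax ((0 : ℝ), (0 : ℝ)) {((-1 : ℝ), (0 : ℝ)), ((1 : ℝ), (0 : ℝ))} = 1 := by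
      rw [rMaxF]; norm_num
    calc sInf (Set.range fun v => rMax v {((-1 : ℝ), (0 : ℝ)), ((1 : ℝ), (0 : ℝ))})
        ≤ rMax ((0 : ℝ), (0 : ℝ)) {((-1 : ℝ), (0 : ℝ)), ((1 : ℝ), (0 : ℝ))} := by
          apply csInf_le ⟨0, ?_⟩ (Set.mem_range_self _)
          rintro y ⟨p, rfl⟩
          dsimp only; rw [rMaxF]; positivity
      _ = 1 := this
  · apply le_csInf (Set.range_nonempty _)
    rintro y ⟨p, rfl⟩
    dsimp only; rw [rMaxF]; exact rMaxF_ge p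

lemma centF :
    chebCent (Set.univ : Set (ℝ × ℝ)) {((-1 : ℝ), (0 : ℝ)), ((1 : ℝ), (0 : ℝ))} =
      {p : ℝ × ℝ | p.1 = 0 ∧ -1 ≤ p.2 ∧ p.2 ≤ 1} := by
  ext p
  simp only [chebCent, Set.mem_setOf_eq, Set.mem_univ, true_and, chebRadF, rMaxF]
  constructor
  · intro h
    have h1 : |p.1 + 1| ≤ 1 := (le_trans (le_max_left _ _) (le_max_left _ _)).trans h.le
    have h2 : |p.1 - 1| ≤ 1 := (le_trans (le_max_left _ _) (le_max_right _ _)).trans h.le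
    have h3 : |p.2| ≤ 1 := (le_trans (le_max_right _ _) (le_max_left _ _)).trans h.le
    rw [abs_le] at h1 h2 h3
    exact ⟨by linarith [h1.1, h1.2, h2.1, h2.2], h3.1, h3.2⟩
  · rintro ⟨h1, h2, h3⟩
    have : |p.2| ≤ 1 := abs_le.mpr ⟨h2, h3⟩
    rw [h1]
    norm_num
    exact this

lemma chebRadG :
    chebRad (Set.univ : Set (ℝ × ℝ)) {((0 : ℝ), (1 : ℝ))} = 0 := by
  unfold chebRad
  rw [Set.image_univ]
  apply le_antisymm
  · have h0 : rMax ((0 : ℝ), (1 : ℝ)) {((0 : ℝ), (1 : ℝ))} = 0 := by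
      rw [rMax_single]; simp
    calc sInf (Set.range fun v => rMax v {((0 : ℝ), (1 : ℝ))})
        ≤ rMax ((0 : ℝ), (1 : ℝ)) {((0 : ℝ), (1 : ℝ))} := by
          apply csInf_le ⟨0, ?_⟩ (Set.mem_range_self _)
          rintro y ⟨p, rfl⟩
          dsimp only; rw [rMax_single]; positivity
      _ = 0 := h0
  · apply le_csInf (Set.range_nonempty _)
    rintro y ⟨p, rfl⟩
    dsimp only; rw [rMax_single]; positivity

lemma centG :
    chebCent (Set.univ : Set (ℝ × ℝ)) {((0 : ℝ), (1 : ℝ))} = {((0 : ℝ), (1 : ℝ))} := by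
  ext p
  simp only [chebCent, Set.mem_setOf_eq, Set.mem_univ, true_and, chebRadG, rMax_single,
    norm_eq_zero, sub_eq_zero, Set.mem_singleton_iff]

/-- Sharpness of the constant `2`: in `ℝ²` with the supremum norm (the product max-norm on
`ℝ × ℝ`), for `F = {(−1,0),(1,0)}` and `G = {(0,1)}` one has
`cent(F) = {0} × [−1,1]`, `cent(G) = {(0,1)}`, `d_H(F,G) = 1` and
`d_H(cent(F), cent(G)) = 2`. -/
theorem chebCent_two_lipschitz_sharp :
    chebCent (Set.univ : Set (ℝ × ℝ)) {((-1 : ℝ), (0 : ℝ)), ((1 : ℝ), (0 : ℝ))} =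
        {p : ℝ × ℝ | p.1 = 0 ∧ -1 ≤ p.2 ∧ p.2 ≤ 1} ∧
      chebCent (Set.univ : Set (ℝ × ℝ)) {((0 : ℝ), (1 : ℝ))} = {((0 : ℝ), (1 : ℝ))} ∧
      Metric.hausdorffDist ({((-1 : ℝ), (0 : ℝ)), ((1 : ℝ), (0 : ℝ))} : Set (ℝ × ℝ))
          {((0 : ℝ), (1 : ℝ))} = 1 ∧
      Metric.hausdorffDist
          (chebCent (Set.univ : Set (ℝ × ℝ)) {((-1 : ℝ), (0 : ℝ)), ((1 : ℝ), (0 : ℝ))})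
          (chebCent (Set.univ : Set (ℝ × ℝ)) {((0 : ℝ), (1 : ℝ))}) = 2 := by
  refine ⟨centF, centG, ?_, ?_⟩
  · -- d_H(F, G) = 1
    have hd1 : dist ((-1 : ℝ), (0 : ℝ)) ((0 : ℝ), (1 : ℝ)) = 1 := by
      simp [Prod.dist_eq, Real.dist_eq]
    have hd2 : dist ((1 : ℝ), (0 : ℝ)) ((0 : ℝ), (1 : ℝ)) = 1 := by
      simp [Prod.dist_eq, Real.dist_eq]
    apply le_antisymm
    · apply Metric.hausdorffDist_le_of_mem_dist (by norm_num)
      · rintro x (rfl | rfl)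
        · exact ⟨_, rfl, hd1.le⟩
        · exact ⟨_, rfl, hd2.le⟩
      · rintro x rfl
        exact ⟨((-1 : ℝ), (0 : ℝ)), Set.mem_insert _ _, by rw [dist_comm]; exact hd1.le⟩
    · have hne : EMetric.hausdorffEdist ({((-1 : ℝ), (0 : ℝ)), ((1 : ℝ), (0 : ℝ))} : Set (ℝ × ℝ))
          {((0 : ℝ), (1 : ℝ))} ≠ ⊤ :=
        Metric.hausdorffEdist_ne_top_of_nonempty_of_bounded
          ⟨_, Set.mem_insert _ _⟩ ⟨_, rfl⟩
          ((Set.toFinite _).isBounded)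
          (Set.toFinite _).isBounded
      have := Metric.infDist_le_hausdorffDist_of_mem
        (Set.mem_insert ((-1 : ℝ), (0 : ℝ)) _) hne
      rwa [Metric.infDist_singleton, hd1] at this
  · -- d_H(cent F, cent G) = 2
    rw [centF, centG]
    have hd : ∀ t : ℝ, dist ((0 : ℝ), t) ((0 : ℝ), (1 : ℝ)) = |t - 1| := by
      intro t
      simp [Prod.dist_eq, Real.dist_eq, abs_nonneg]
    apply le_antisymm
    · apply Metric.hausdorffDist_le_of_mem_dist (by norm_num)
      · rintro ⟨x, y⟩ ⟨rfl, h1, h2⟩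
        refine ⟨_, rfl, ?_⟩
        rw [hd]
        rw [abs_le]
        constructor <;> dsimp at h1 h2 <;> linarith
      · rintro x rfl
        exact ⟨((0 : ℝ), (1 : ℝ)), ⟨rfl, by norm_num, le_refl 1⟩, by simp⟩
    · have hbd : Bornology.IsBounded {p : ℝ × ℝ | p.1 = 0 ∧ -1 ≤ p.2 ∧ p.2 ≤ 1} := by
        apply Bornology.IsBounded.subset (Metric.isBounded_closedBall (x := ((0:ℝ),(0:ℝ))) (r := 1))
        rintro ⟨x, y⟩ ⟨rfl, h1, h2⟩
        simp only [Set.mem_setOf_eq] at h1 h2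
        rw [Metric.mem_closedBall, Prod.dist_eq]
        simp only [Real.dist_eq, sub_zero]
        simp only [max_le_iff, abs_le]
        refine ⟨⟨by norm_num, by norm_num⟩, h1, h2⟩
      have hne : EMetric.hausdorffEdist {p : ℝ × ℝ | p.1 = 0 ∧ -1 ≤ p.2 ∧ p.2 ≤ 1}
          ({((0 : ℝ), (1 : ℝ))} : Set (ℝ × ℝ)) ≠ ⊤ :=
        Metric.hausdorffEdist_ne_top_of_nonempty_of_bounded
          ⟨((0 : ℝ), (-1 : ℝ)), rfl, by norm_num, by norm_num⟩ ⟨_, rfl⟩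
          hbd (Set.finite_singleton _).isBounded
      have hmem : ((0 : ℝ), (-1 : ℝ)) ∈ {p : ℝ × ℝ | p.1 = 0 ∧ -1 ≤ p.2 ∧ p.2 ≤ 1} :=
        ⟨rfl, by norm_num, by norm_num⟩
      have := Metric.infDist_le_hausdorffDist_of_mem hmem hne
      rw [Metric.infDist_singleton, hd] at this
      norm_num at this
      exact this
end

section
/- Let X be a real Banach space that is an L₁-predual and let K be a compact Hausdorff space. Let C(K,X) denote the Banach space of X-valued continuous functions on K with the supremum norm. Then every nonempty compact subset F of C(K,X) has a nonempty set of Chebyshev centers cent_{C(K,X)}(F), and for all nonempty compact F₁, F₂ ⊆ C(K,X), d_H(cent_{C(K,X)}(F₁), cent_{C(K,X)}(F₂)) ≤ 2·d_H(F₁, F₂). -/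
open Filter Topology MeasureTheory

universe u

namespace ChebAux

/-- decomposition kernel for reals -/
noncomputable def bfun {n : ℕ} (a : Fin n → ℝ) (i j : Fin n) : ℝ :=
  (max (a i) 0 * max (-(a j)) 0 - max (a j) 0 * max (-(a i)) 0) / (∑ k, max (a k) 0)

lemma bfun_antisymm {n : ℕ} (a : Fin n → ℝ) (i j : Fin n) : bfun a i j = -bfun a j i := by
  unfold bfun; rw [← neg_div]; ring_nf

lemma sum_pos_eq {n : ℕ} (a : Fin n → ℝ) (h : ∑ k, a k = 0) :
    ∑ k, max (-(a k)) 0 = ∑ k, max (a k) 0 := by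
  have : ∀ k, max (-(a k)) 0 = max (a k) 0 - a k := by
    intro k
    rcases le_total (a k) 0 with hk | hk
    · rw [max_eq_left (by linarith), max_eq_right hk]; ring
    · rw [max_eq_right (by linarith), max_eq_left hk]; ring
  simp only [this, Finset.sum_sub_distrib, h, sub_zero]

lemma sum_bfun {n : ℕ} (a : Fin n → ℝ) (h : ∑ k, a k = 0) (i : Fin n) :
    ∑ j, bfun a i j = a i := by
  set S := ∑ k, max (a k) 0 with hS
  have hSnn : 0 ≤ S := Finset.sum_nonneg fun k _ => le_max_right _ _
  have hq : ∑ k, max (-(a k)) 0 = S := sum_pos_eq a h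
  have hdecomp : max (a i) 0 - max (-(a i)) 0 = a i := by
    rcases le_total (a i) 0 with hk | hk
    · rw [max_eq_right hk, max_eq_left (by linarith)]; ring
    · rw [max_eq_left hk, max_eq_right (by linarith)]; ring
  rcases eq_or_lt_of_le hSnn with hS0 | hSpos
  · -- S = 0: all max (a k) 0 = 0 and all max (-(a k)) 0 = 0
    have hz : ∀ k ∈ (Finset.univ : Finset (Fin n)), max (a k) 0 = 0 :=
      (Finset.sum_eq_zero_iff_of_nonneg (fun k _ => le_max_right _ _)).1 hS0.symm
    have hz2 : ∀ k ∈ (Finset.univ : Finset (Fin n)), max (-(a k)) 0 = 0 := by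
      apply (Finset.sum_eq_zero_iff_of_nonneg (fun k _ => le_max_right _ _)).1
      rw [hq, ← hS0]
    have hai : a i = 0 := by
      have h1 := hz i (Finset.mem_univ i); have h2 := hz2 i (Finset.mem_univ i)
      rw [← hdecomp, h1, h2, sub_zero]
    have : ∀ j, bfun a i j = 0 := by
      intro j; unfold bfun; rw [← hS, ← hS0]; simp
    simp [this, hai]
  · have : ∑ j, bfun a i j =
        (max (a i) 0 * (∑ j, max (-(a j)) 0) - max (-(a i)) 0 * (∑ j, max (a j) 0)) / S := by
      unfold bfun
      rw [← Finset.sum_div, Finset.mul_sum, Finset.mul_sum, ← Finset.sum_sub_distrib]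
      congr 1; apply Finset.sum_congr rfl; intro j _; ring
    rw [this, hq, ← hS, div_eq_iff hSpos.ne']
    linear_combination S * hdecomp

lemma sum_abs_bfun {n : ℕ} (a : Fin n → ℝ) (h : ∑ k, a k = 0) (i : Fin n) :
    ∑ j, |bfun a i j| ≤ |a i| := by
  set S := ∑ k, max (a k) 0 with hS
  have hSnn : 0 ≤ S := Finset.sum_nonneg fun k _ => le_max_right _ _
  have hq : ∑ k, max (-(a k)) 0 = S := sum_pos_eq a h
  have habs : max (a i) 0 + max (-(a i)) 0 = |a i| := by
    rcases le_total (a i) 0 with hk | hk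
    · rw [max_eq_right hk, max_eq_left (by linarith), abs_of_nonpos hk]; ring
    · rw [max_eq_left hk, max_eq_right (by linarith), abs_of_nonneg hk]; ring
  rcases eq_or_lt_of_le hSnn with hS0 | hSpos
  · have : ∀ j, bfun a i j = 0 := by
      intro j; unfold bfun; rw [← hS, ← hS0]; simp
    simp [this, abs_nonneg]
  · have hle : ∀ j, |bfun a i j| ≤
        (max (a i) 0 * max (-(a j)) 0 + max (a j) 0 * max (-(a i)) 0) / S := by
      intro j
      unfold bfun
      rw [abs_div, abs_of_pos hSpos]
      gcongr
      refine (abs_sub _ _).trans ?_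
      rw [abs_of_nonneg (by positivity), abs_of_nonneg (by positivity)]
    calc ∑ j, |bfun a i j| ≤
        ∑ j, (max (a i) 0 * max (-(a j)) 0 + max (a j) 0 * max (-(a i)) 0) / S :=
          Finset.sum_le_sum fun j _ => hle j
      _ = (max (a i) 0 * S + S * max (-(a i)) 0) / S := by
          rw [← Finset.sum_div]; congr 1
          rw [Finset.sum_add_distrib, ← Finset.mul_sum, ← Finset.sum_mul, hq, ← hS]
      _ = |a i| := by
          rw [← habs, div_eq_iff hSpos.ne']; ring

variable {α : Type*} [MeasurableSpace α] {μ : Measure α}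

lemma Lp_coeFn_sum {ι : Type*} (s : Finset ι) (f : ι → Lp ℝ 1 μ) :
    (↑↑(∑ i ∈ s, f i) : α → ℝ) =ᵐ[μ] fun a => ∑ i ∈ s, (f i : α → ℝ) a := by
  induction s using Finset.cons_induction with
  | empty => simp only [Finset.sum_empty]; exact Lp.coeFn_zero (E := ℝ) (p := 1) (μ := μ)
  | cons i s hi ih =>
    rw [Finset.sum_cons]
    filter_upwards [Lp.coeFn_add (f i) (∑ j ∈ s, f j), ih] with a h1 h2
    rw [Finset.sum_cons, h1, Pi.add_apply, h2]

lemma L1_decomp {n : ℕ} (f : Fin n → Lp ℝ 1 μ) (hf : ∑ i, f i = 0) :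
    ∃ h : Fin n → Fin n → Lp ℝ 1 μ, (∀ i j, h i j = - h j i) ∧
      (∀ i, ∑ j, h i j = f i) ∧ (∀ i, ∑ j, ‖h i j‖ ≤ ‖f i‖) := by
  set a : Fin n → α → ℝ := fun k => (f k : α → ℝ) with ha
  have hsum0 : ∀ᵐ ω ∂μ, ∑ k, a k ω = 0 := by
    filter_upwards [Lp_coeFn_sum Finset.univ f, Lp.coeFn_zero (E := ℝ) (p := 1) (μ := μ)]
      with ω h1 h2
    have : ((∑ k, f k : Lp ℝ 1 μ) : α → ℝ) ω = 0 := by rw [hf]; exact h2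
    rw [h1] at this; exact this
  set c : Fin n → Fin n → α → ℝ := fun i j ω => bfun (fun k => a k ω) i j with hc
  have hmeas : ∀ i j, AEStronglyMeasurable (c i j) μ := by
    intro i j
    have hm : ∀ k, AEMeasurable (a k) μ := fun k => (Lp.aestronglyMeasurable (f k)).aemeasurable
    have : AEMeasurable (c i j) μ := by
      rw [hc]
      unfold bfun
      exact (((((hm i).max aemeasurable_const).mul ((hm j).neg.max aemeasurable_const)).sub
        (((hm j).max aemeasurable_const).mul ((hm i).neg.max aemeasurable_const))).div
        (Finset.aemeasurable_fun_sum Finset.univ fun k _ => (hm k).max aemeasurable_const))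
    exact this.aestronglyMeasurable
  have hbd : ∀ i j, ∀ᵐ ω ∂μ, |c i j ω| ≤ |a i ω| := by
    intro i j
    filter_upwards [hsum0] with ω h0
    calc |c i j ω| ≤ ∑ j', |bfun (fun k => a k ω) i j'| :=
          Finset.single_le_sum (f := fun j' => |bfun (fun k => a k ω) i j'|)
            (fun j' _ => abs_nonneg _) (Finset.mem_univ j)
      _ ≤ |a i ω| := sum_abs_bfun _ h0 i
  have hint : ∀ i j, Integrable (c i j) μ := by
    intro i j
    refine Integrable.mono (L1.integrable_coeFn (f i)) (hmeas i j) ?_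
    filter_upwards [hbd i j] with ω h
    simpa [Real.norm_eq_abs] using h
  refine ⟨fun i j => (hint i j).toL1 (c i j), ?_, ?_, ?_⟩
  · intro i j
    apply Lp.ext
    filter_upwards [(hint i j).coeFn_toL1, Lp.coeFn_neg ((hint j i).toL1 (c j i)),
      (hint j i).coeFn_toL1] with ω h1 h2 h3
    rw [h1, h2, Pi.neg_apply, h3]
    exact bfun_antisymm _ i j
  · intro i
    apply Lp.ext
    have hs := Lp_coeFn_sum (Finset.univ) (fun j => (hint i j).toL1 (c i j))
    have hsc : ∀ᵐ ω ∂μ, ∀ j, ((hint i j).toL1 (c i j) : α → ℝ) ω = c i j ω :=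
      MeasureTheory.ae_all_iff.mpr fun j => (hint i j).coeFn_toL1
    filter_upwards [hs, hsc, hsum0] with ω h1 h2 h0
    rw [h1]
    calc ∑ j, ((hint i j).toL1 (c i j) : α → ℝ) ω = ∑ j, c i j ω :=
          Finset.sum_congr rfl fun j _ => h2 j
      _ = a i ω := sum_bfun _ h0 i
  · intro i
    have hn : ∀ j, ‖(hint i j).toL1 (c i j)‖ = ∫ ω, |c i j ω| ∂μ := by
      intro j
      rw [L1.norm_eq_integral_norm]
      refine integral_congr_ae ?_
      filter_upwards [(hint i j).coeFn_toL1] with ω h1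
      rw [h1, Real.norm_eq_abs]
    calc ∑ j, ‖(hint i j).toL1 (c i j)‖ = ∑ j, ∫ ω, |c i j ω| ∂μ :=
          Finset.sum_congr rfl fun j _ => hn j
      _ = ∫ ω, ∑ j, |c i j ω| ∂μ :=
          (integral_finset_sum Finset.univ fun j _ => (hint i j).abs).symm
      _ ≤ ∫ ω, |a i ω| ∂μ := by
          refine integral_mono_ae (integrable_finset_sum _ fun j _ => (hint i j).abs)
            (L1.integrable_coeFn (f i)).abs ?_
          filter_upwards [hsum0] with ω h0
          exact sum_abs_bfun _ h0 i
      _ = ‖f i‖ := by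
          rw [L1.norm_eq_integral_norm]
          refine integral_congr_ae (Eventually.of_forall fun ω => ?_)
          simp [ha, Real.norm_eq_abs]

variable {Y : Type*} [NormedAddCommGroup Y] [NormedSpace ℝ Y]

lemma clm_eq_zero_of_bddAbove (φ : Y →L[ℝ] ℝ) (C : ℝ) (h : ∀ y, φ y ≤ C) : φ = 0 := by
  have h0 : ∀ y, φ y ≤ 0 := by
    intro y
    by_contra hy
    push_neg at hy
    have ht : 0 < (C + 1) / φ y ∨ C + 1 ≤ 0 := by
      rcases le_or_gt (C + 1) 0 with h' | h'
      · exact Or.inr h'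
      · exact Or.inl (div_pos h' hy)
    have key : ∀ t : ℝ, 0 < t → t * φ y ≤ C := by
      intro t ht'
      have := h (t • y)
      rwa [ContinuousLinearMap.map_smul, smul_eq_mul] at this
    rcases ht with ht | ht
    · have := key ((C + 1) / φ y) ht
      rw [div_mul_cancel₀ _ hy.ne'] at this
      linarith
    · have := key 1 one_pos
      nlinarith [h 0, map_zero φ]
  ext y
  have h1 := h0 y
  have h2 := h0 (-y)
  rw [map_neg] at h2
  simp only [ContinuousLinearMap.zero_apply]
  linarith

lemma exists_approx_norm (G : Y →L[ℝ] ℝ) {s η : ℝ} (hs : 0 < s) (hη : 0 < η) :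
    ∃ d : Y, ‖d‖ ≤ s ∧ s * ‖G‖ - η ≤ G d := by
  rcases lt_or_ge (‖G‖ - η / s) 0 with hc | hc
  · refine ⟨0, by simp [hs.le], ?_⟩
    rw [map_zero]
    nlinarith [(lt_div_iff₀ hs).mp (sub_neg.mp hc), norm_nonneg G]
  · have hlt : ‖G‖ - η / s < ‖G‖ := by
      have : 0 < η / s := div_pos hη hs
      linarith
    obtain ⟨z, hz1, hz2⟩ := G.exists_lt_apply_of_lt_opNorm hlt
    rw [Real.norm_eq_abs] at hz2
    set w := if 0 ≤ G z then z else -z with hw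
    have hwn : ‖w‖ < 1 := by rw [hw]; split <;> simpa
    have hgw : ‖G‖ - η / s < G w := by
      rw [hw]; split_ifs with h
      · rwa [abs_of_nonneg h] at hz2
      · rw [map_neg]; rwa [abs_of_neg (lt_of_not_ge h)] at hz2
    refine ⟨s • w, ?_, ?_⟩
    · rw [norm_smul, Real.norm_eq_abs, abs_of_pos hs]
      nlinarith [norm_nonneg w]
    · rw [ContinuousLinearMap.map_smul, smul_eq_mul]
      have h2 : s * (‖G‖ - η / s) ≤ s * G w := by nlinarith
      have h3 : s * (‖G‖ - η / s) = s * ‖G‖ - η := by field_simp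
      linarith

lemma ball_sep {n : ℕ} (x : Fin n → Y) (s : Fin n → ℝ) (hs : ∀ i, 0 < s i)
    {δ : ℝ} (hδ : 0 < δ) (hempty : ∀ y : Y, ∃ i, s i + δ ≤ ‖y - x i‖) :
    ∃ G : Fin n → (Y →L[ℝ] ℝ), (∑ i, G i) = 0 ∧ ∑ i, s i * ‖G i‖ < ∑ i, G i (x i) := by
  classical
  set U : Set (Fin n → Y) := Metric.ball x δ with hU
  set T : Set (Fin n → Y) :=
    {z | ∃ (y : Y) (d : Fin n → Y), (∀ i, ‖d i‖ ≤ s i) ∧ z = fun i => y + d i} with hT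
  have hUc : Convex ℝ U := convex_ball x δ
  have hUo : IsOpen U := Metric.isOpen_ball
  have hTc : Convex ℝ T := by
    rintro z₁ ⟨y₁, d₁, hd₁, rfl⟩ z₂ ⟨y₂, d₂, hd₂, rfl⟩ t₁ t₂ ht₁ ht₂ hsum
    refine ⟨t₁ • y₁ + t₂ • y₂, fun i => t₁ • d₁ i + t₂ • d₂ i, fun i => ?_, ?_⟩
    · calc ‖t₁ • d₁ i + t₂ • d₂ i‖ ≤ ‖t₁ • d₁ i‖ + ‖t₂ • d₂ i‖ := norm_add_le _ _
        _ = t₁ * ‖d₁ i‖ + t₂ * ‖d₂ i‖ := by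
            rw [norm_smul, norm_smul, Real.norm_eq_abs, Real.norm_eq_abs,
              abs_of_nonneg ht₁, abs_of_nonneg ht₂]
        _ ≤ t₁ * s i + t₂ * s i := by
            have := hd₁ i; have := hd₂ i
            nlinarith
        _ = s i := by rw [← add_mul, hsum, one_mul]
    · funext i
      change t₁ • (y₁ + d₁ i) + t₂ • (y₂ + d₂ i) = _
      rw [smul_add, smul_add]
      exact add_add_add_comm _ _ _ _
  have hdisj : Disjoint U T := by
    rw [Set.disjoint_left]
    rintro z hz ⟨y, d, hd, rfl⟩
    obtain ⟨i, hi⟩ := hempty y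
    have h1 : dist (y + d i) (x i) < δ := lt_of_le_of_lt (dist_le_pi_dist (fun i => y + d i) x i) hz
    have : ‖y - x i‖ ≤ ‖y + d i - x i‖ + ‖d i‖ := by
      have : y - x i = (y + d i - x i) + (-(d i)) := by abel
      rw [this]
      exact (norm_add_le _ _).trans (by rw [norm_neg])
    rw [dist_eq_norm] at h1
    have := hd i
    linarith
  obtain ⟨f, u, hfU, hfT⟩ := geometric_hahn_banach_open hUc hUo hTc hdisj
  set sing : Fin n → (Y →L[ℝ] (Fin n → Y)) := fun i =>
    { toLinearMap := LinearMap.single ℝ (fun _ : Fin n => Y) i,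
      cont := by
        have : Continuous fun y : Y => (Pi.single i y : Fin n → Y) :=
          continuous_single (A := fun _ : Fin n => Y) i
        exact this } with hsing
  set G : Fin n → (Y →L[ℝ] ℝ) := fun i => -(f.comp (sing i)) with hG
  have hfz : ∀ z : Fin n → Y, f z = ∑ i, f (Pi.single i (z i)) := by
    intro z
    conv_lhs => rw [← Finset.univ_sum_single z]
    rw [map_sum]
  have hGz : ∀ z : Fin n → Y, ∑ i, G i (z i) = -f z := by
    intro z
    rw [hfz z, ← Finset.sum_neg_distrib]
    refine Finset.sum_congr rfl fun i _ => ?_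
    simp [hG, hsing]
    rfl
  -- ∑ G i = 0
  have hsumG : (∑ i, G i) = 0 := by
    apply clm_eq_zero_of_bddAbove _ (-u)
    intro y
    have hyT : (fun _ : Fin n => y) ∈ T := ⟨y, 0, fun i => by simp [(hs i).le], by simp⟩
    have := hfT _ hyT
    have h2 : ∑ i, G i y = -f (fun _ => y) := hGz (fun _ => y)
    rw [ContinuousLinearMap.sum_apply, h2]
    linarith
  refine ⟨G, hsumG, ?_⟩
  -- upper bound for sup over products of balls
  have hdbound : ∀ d : Fin n → Y, (∀ i, ‖d i‖ ≤ s i) → ∑ i, G i (d i) ≤ -u := by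
    intro d hd
    have hdT : (fun i => (0 : Y) + d i) ∈ T := ⟨0, d, hd, rfl⟩
    have := hfT _ hdT
    have h2 := hGz (fun i => (0 : Y) + d i)
    simp only [zero_add] at h2 this
    linarith
  have hnorm : ∑ i, s i * ‖G i‖ ≤ -u := by
    refine le_of_forall_pos_le_add fun η hη => ?_
    have hchoice : ∀ i : Fin n, ∃ d : Y, ‖d‖ ≤ s i ∧ s i * ‖G i‖ - η / (n + 1) ≤ G i d :=
      fun i => exists_approx_norm (G i) (hs i) (by positivity)
    choose d hd1 hd2 using hchoice
    have h1 := hdbound d hd1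
    have h2 : ∑ i, (s i * ‖G i‖ - η / (n + 1)) ≤ ∑ i, G i (d i) :=
      Finset.sum_le_sum fun i _ => hd2 i
    rw [Finset.sum_sub_distrib, Finset.sum_const, Finset.card_univ, Fintype.card_fin] at h2
    have h3 : (n : ℝ) * (η / (n + 1)) ≤ η := by
      have hfrac : (n : ℝ) / (n + 1) ≤ 1 := by
        rw [div_le_one (by positivity)]; linarith
      calc (n : ℝ) * (η / (n + 1)) = ((n : ℝ) / (n + 1)) * η := by ring
        _ ≤ 1 * η := mul_le_mul_of_nonneg_right hfrac hη.le
        _ = η := one_mul η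
    have h4 : ∑ i, s i * ‖G i‖ ≤ ∑ i, G i (d i) + (n:ℝ) * (η / (n+1)) := by
      simp only [nsmul_eq_mul] at h2
      linarith
    linarith
  -- f x < u since x ∈ U
  have hpx : f x < u := hfU x (Metric.mem_ball_self hδ)
  have h5 : ∑ i, G i (x i) = -f x := hGz x
  linarith


lemma weakIP {X : Type*} [NormedAddCommGroup X] [NormedSpace ℝ X] (hX : IsL1Predual X)
    {n : ℕ} (x : Fin n → X) (r : Fin n → ℝ) (hp : ∀ i j, ‖x i - x j‖ ≤ r i + r j)
    {ε : ℝ} (hε : 0 < ε) : ∃ y : X, ∀ i, ‖y - x i‖ ≤ r i + ε := by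
  by_contra hcon
  push_neg at hcon
  obtain ⟨Ω, mΩ, μ, ⟨T⟩⟩ := hX
  have hr0 : ∀ i, 0 ≤ r i := fun i => by
    have := hp i i; simp only [sub_self, norm_zero] at this; linarith
  obtain ⟨G, hsumG, hlt⟩ := ball_sep x (fun i => r i + ε / 2)
    (fun i => by linarith [hr0 i]) (by linarith : (0:ℝ) < ε / 2)
    (fun y => by
      obtain ⟨i, hi⟩ := hcon y
      exact ⟨i, by linarith⟩)
  set f : Fin n → Lp ℝ 1 μ := fun i => T (G i) with hf
  have hfsum : ∑ i, f i = 0 := by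
    rw [hf, ← map_sum, hsumG, map_zero]
  obtain ⟨h, hanti, hsum, hnorm⟩ := L1_decomp f hfsum
  set φ : Fin n → Fin n → StrongDual ℝ X := fun i j => T.symm (h i j) with hφ
  have hGi : ∀ i, (G i : X →L[ℝ] ℝ) = ∑ j, φ i j := by
    intro i
    have h1 : ∑ j, φ i j = T.symm (f i) := by
      rw [hφ]
      simp only
      rw [← hsum i, map_sum]
    rw [h1, hf]
    simp only
    rw [LinearIsometryEquiv.symm_apply_apply]
  have hanti' : ∀ i j, φ i j = -(φ j i) := fun i j => by
    rw [hφ]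
    simp only
    rw [hanti i j, map_neg]
  have hA : ∑ i, G i (x i) = ∑ i, ∑ j, (φ i j) (x i) :=
    Finset.sum_congr rfl fun i _ => by rw [hGi i, ContinuousLinearMap.sum_apply]
  have hswap : ∑ i, ∑ j, (φ i j) (x j) = -∑ i, ∑ j, (φ i j) (x i) := by
    rw [Finset.sum_comm, ← Finset.sum_neg_distrib]
    refine Finset.sum_congr rfl fun i _ => ?_
    rw [← Finset.sum_neg_distrib]
    refine Finset.sum_congr rfl fun j _ => ?_
    rw [hanti' j i]
    simp
  have hbound : ∀ i j, (φ i j) (x i) - (φ i j) (x j) ≤ ‖h i j‖ * (r i + r j) := by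
    intro i j
    have h1 : (φ i j) (x i) - (φ i j) (x j) = (φ i j) (x i - x j) := by rw [map_sub]
    rw [h1]
    calc (φ i j) (x i - x j) ≤ ‖(φ i j) (x i - x j)‖ := le_abs_self _
      _ ≤ ‖φ i j‖ * ‖x i - x j‖ := ContinuousLinearMap.le_opNorm _ _
      _ = ‖h i j‖ * ‖x i - x j‖ := by rw [hφ]; simp only; rw [LinearIsometryEquiv.norm_map]
      _ ≤ ‖h i j‖ * (r i + r j) := by
          apply mul_le_mul_of_nonneg_left (hp i j) (norm_nonneg _)
  have hnormsym : ∀ i j, ‖h i j‖ = ‖h j i‖ := fun i j => by rw [hanti i j, norm_neg]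
  have key : 2 * ∑ i, G i (x i) ≤ 2 * ∑ i, r i * ‖G i‖ := by
    have h2A : 2 * ∑ i, G i (x i)
        = ∑ i, ∑ j, ((φ i j) (x i) - (φ i j) (x j)) := by
      have e0 : ∑ i, ∑ j, ((φ i j) (x i) - (φ i j) (x j))
          = ∑ i, (∑ j, (φ i j) (x i) - ∑ j, (φ i j) (x j)) :=
        Finset.sum_congr rfl fun i _ => Finset.sum_sub_distrib _ _
      rw [e0, Finset.sum_sub_distrib, hswap, ← hA]
      ring
    have h2B : ∑ i, ∑ j, ((φ i j) (x i) - (φ i j) (x j))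
        ≤ ∑ i, ∑ j, ‖h i j‖ * (r i + r j) :=
      Finset.sum_le_sum fun i _ => Finset.sum_le_sum fun j _ => hbound i j
    have h2C : ∑ i, ∑ j, ‖h i j‖ * (r i + r j) = 2 * ∑ i, r i * ∑ j, ‖h i j‖ := by
      have e1 : ∑ i, ∑ j, ‖h i j‖ * (r i + r j)
          = ∑ i, ∑ j, ‖h i j‖ * r i + ∑ i, ∑ j, ‖h i j‖ * r j := by
        rw [← Finset.sum_add_distrib]
        refine Finset.sum_congr rfl fun i _ => ?_
        rw [← Finset.sum_add_distrib]
        refine Finset.sum_congr rfl fun j _ => ?_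
        ring
      have e2 : ∑ i, ∑ j, ‖h i j‖ * r j = ∑ i, ∑ j, ‖h i j‖ * r i := by
        rw [Finset.sum_comm]
        refine Finset.sum_congr rfl fun i _ => Finset.sum_congr rfl fun j _ => ?_
        rw [hnormsym]
      rw [e1, e2]
      rw [Finset.mul_sum]
      rw [← Finset.sum_add_distrib]
      refine Finset.sum_congr rfl fun i _ => ?_
      rw [Finset.mul_sum, Finset.mul_sum]
      rw [← Finset.sum_add_distrib]
      refine Finset.sum_congr rfl fun j _ => ?_
      ring
    have h2D : ∑ i, r i * ∑ j, ‖h i j‖ ≤ ∑ i, r i * ‖G i‖ := by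
      refine Finset.sum_le_sum fun i _ => ?_
      have : ‖f i‖ = ‖G i‖ := by rw [hf]; simp only; rw [LinearIsometryEquiv.norm_map]
      rw [← this]
      exact mul_le_mul_of_nonneg_left (hnorm i) (hr0 i)
    calc 2 * ∑ i, G i (x i) = ∑ i, ∑ j, ((φ i j) (x i) - (φ i j) (x j)) := h2A
      _ ≤ ∑ i, ∑ j, ‖h i j‖ * (r i + r j) := h2B
      _ = 2 * ∑ i, r i * ∑ j, ‖h i j‖ := h2C
      _ ≤ 2 * ∑ i, r i * ‖G i‖ := by linarith
  have hsplit : ∑ i, (r i + ε / 2) * ‖G i‖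
      = ∑ i, r i * ‖G i‖ + (ε / 2) * ∑ i, ‖G i‖ := by
    rw [Finset.mul_sum, ← Finset.sum_add_distrib]
    exact Finset.sum_congr rfl fun i _ => by ring
  have hGnn : 0 ≤ ∑ i, ‖G i‖ := Finset.sum_nonneg fun i _ => norm_nonneg _
  rw [hsplit] at hlt
  nlinarith


variable {X : Type*} [NormedAddCommGroup X] [NormedSpace ℝ X]
variable {K : Type*} [TopologicalSpace K] [CompactSpace K] [T2Space K]

lemma weakIP_CKX (hX : IsL1Predual X) (l : List (C(K, X) × ℝ))
    (hl : ∀ p ∈ l, ∀ q ∈ l, ‖p.1 - q.1‖ ≤ p.2 + q.2) {ε : ℝ} (hε : 0 < ε) :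
    ∃ g : C(K, X), ∀ p ∈ l, ‖g - p.1‖ ≤ p.2 + ε := by
  classical
  have hr0 : ∀ p ∈ l, 0 ≤ p.2 := by
    intro p hp
    have := hl p hp p hp
    simp only [sub_self, norm_zero] at this
    linarith
  -- pointwise solution
  have hch : ∀ k : K, ∃ y : X, ∀ p ∈ l, ‖y - p.1 k‖ ≤ p.2 + ε / 2 := by
    intro k
    obtain ⟨y, hy⟩ := weakIP hX (n := l.length) (fun i => (l.get i).1 k)
      (fun i => (l.get i).2)
      (fun i j => by
        calc ‖(l.get i).1 k - (l.get j).1 k‖ = ‖((l.get i).1 - (l.get j).1) k‖ := by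
              rw [ContinuousMap.sub_apply]
          _ ≤ ‖(l.get i).1 - (l.get j).1‖ := ContinuousMap.norm_coe_le_norm _ k
          _ ≤ (l.get i).2 + (l.get j).2 := hl _ (l.get_mem _) _ (l.get_mem _))
      (by linarith : (0:ℝ) < ε / 2)
    refine ⟨y, fun p hp => ?_⟩
    obtain ⟨i, rfl⟩ := List.mem_iff_get.mp hp
    exact hy i
  choose y hy using hch
  set U : K → Set K := fun k => {k' | ∀ p ∈ l, ‖y k - p.1 k'‖ < p.2 + ε} with hU
  have hUopen : ∀ k, IsOpen (U k) := by
    intro k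
    have : U k = ⋂ p ∈ {p | p ∈ l}, {k' | ‖y k - p.1 k'‖ < p.2 + ε} := by
      ext k'; simp [hU]
    rw [this]
    refine (List.finite_toSet l).isOpen_biInter fun p _ => ?_
    exact isOpen_lt (Continuous.norm (continuous_const.sub (map_continuous p.1)))
      continuous_const
  have hUmem : ∀ k, k ∈ U k := by
    intro k p hp
    have := hy k p hp
    linarith
  have hcov : (Set.univ : Set K) ⊆ ⋃ k, U k := fun k _ => Set.mem_iUnion.mpr ⟨k, hUmem k⟩
  obtain ⟨ρ, hρsub⟩ := PartitionOfUnity.exists_isSubordinate (ι := K) isClosed_univ U hUopen hcov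
  have hcont : Continuous fun k => ∑ᶠ i, ρ i k • y i := by
    refine hρsub.continuous_finsum_smul (fun i => ?_) (fun i x _ => continuousWithinAt_const)
    exact hUopen i
  set g : C(K, X) := ⟨fun k => ∑ᶠ i, ρ i k • y i, hcont⟩ with hg
  refine ⟨g, fun p hp => ?_⟩
  rw [ContinuousMap.norm_le _ (by linarith [hr0 p hp])]
  intro k
  have hsum1 : ∑ i ∈ ρ.finsupport k, ρ i k = 1 := ρ.sum_finsupport (Set.mem_univ k)
  have hgk : g k = ∑ i ∈ ρ.finsupport k, ρ i k • y i := by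
    rw [hg]
    exact (ρ.sum_finsupport_smul_eq_finsum (fun i _ => y i)).symm
  have hrepr : p.1 k = ∑ i ∈ ρ.finsupport k, ρ i k • p.1 k := by
    rw [← Finset.sum_smul, hsum1, one_smul]
  have hdiff : g k - p.1 k = ∑ i ∈ ρ.finsupport k, ρ i k • (y i - p.1 k) := by
    rw [hgk]
    conv_lhs => rw [hrepr]
    rw [← Finset.sum_sub_distrib]
    exact Finset.sum_congr rfl fun i _ => (smul_sub _ _ _).symm
  have hb : ∀ i ∈ ρ.finsupport k, ‖ρ i k • (y i - p.1 k)‖ ≤ ρ i k * (p.2 + ε) := by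
    intro i hi
    rw [norm_smul, Real.norm_eq_abs, abs_of_nonneg (ρ.nonneg i k)]
    refine mul_le_mul_of_nonneg_left ?_ (ρ.nonneg i k)
    have hne : ρ i k ≠ 0 := by
      rw [ρ.mem_finsupport] at hi
      simpa using hi
    have hksupp : k ∈ U i :=
      hρsub i (subset_tsupport _ (Function.mem_support.mpr hne))
    exact le_of_lt (hksupp p hp)
  calc ‖g k - p.1 k‖ = ‖∑ i ∈ ρ.finsupport k, ρ i k • (y i - p.1 k)‖ := by rw [hdiff]
    _ ≤ ∑ i ∈ ρ.finsupport k, ‖ρ i k • (y i - p.1 k)‖ := norm_sum_le _ _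
    _ ≤ ∑ i ∈ ρ.finsupport k, ρ i k * (p.2 + ε) := Finset.sum_le_sum hb
    _ = p.2 + ε := by rw [← Finset.sum_mul, hsum1, one_mul]

variable [CompleteSpace X]

lemma weakIP_compact (hX : IsL1Predual X) (A : Set C(K, X)) (hA : IsCompact A)
    (r : ℝ) (hAA : ∀ a ∈ A, ∀ b ∈ A, ‖a - b‖ ≤ 2 * r)
    (l : List (C(K, X) × ℝ)) (hAl : ∀ a ∈ A, ∀ p ∈ l, ‖a - p.1‖ ≤ r + p.2)
    (hll : ∀ p ∈ l, ∀ q ∈ l, ‖p.1 - q.1‖ ≤ p.2 + q.2) {ε : ℝ} (hε : 0 < ε) :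
    ∃ g : C(K, X), (∀ a ∈ A, ‖g - a‖ ≤ r + ε) ∧ (∀ p ∈ l, ‖g - p.1‖ ≤ p.2 + ε) := by
  classical
  obtain ⟨t, htA, htfin, htcov⟩ := hA.elim_finite_subcover_image
    (c := fun a => Metric.ball a (ε / 2)) (fun a _ => Metric.isOpen_ball)
    (fun a ha => Set.mem_biUnion ha (Metric.mem_ball_self (by linarith)))
  set la : List C(K, X) := htfin.toFinset.toList with hla
  have hmemla : ∀ a, a ∈ la ↔ a ∈ t := by
    intro a
    rw [hla, Finset.mem_toList, Set.Finite.mem_toFinset]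
  set l' : List (C(K, X) × ℝ) := la.map (fun a => (a, r)) ++ l with hl'
  have hmem1 : ∀ a ∈ t, (a, r) ∈ l' := by
    intro a ha
    rw [hl', List.mem_append]
    exact Or.inl (List.mem_map.mpr ⟨a, (hmemla a).mpr ha, rfl⟩)
  have hmem2 : ∀ p ∈ l, p ∈ l' := fun p hp => by
    rw [hl', List.mem_append]; exact Or.inr hp
  have hl'pair : ∀ p ∈ l', ∀ q ∈ l', ‖p.1 - q.1‖ ≤ p.2 + q.2 := by
    intro p hp q hq
    rw [hl', List.mem_append] at hp hq
    rcases hp with hp | hp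
    · obtain ⟨a, ha, rfl⟩ := List.mem_map.mp hp
      have haA : a ∈ A := htA ((hmemla a).mp ha)
      rcases hq with hq | hq
      · obtain ⟨b, hb, rfl⟩ := List.mem_map.mp hq
        have hbA : b ∈ A := htA ((hmemla b).mp hb)
        simpa [two_mul] using hAA a haA b hbA
      · exact hAl a haA q hq
    · rcases hq with hq | hq
      · obtain ⟨b, hb, rfl⟩ := List.mem_map.mp hq
        have hbA : b ∈ A := htA ((hmemla b).mp hb)
        have := hAl b hbA p hp
        calc ‖p.1 - b‖ = ‖b - p.1‖ := norm_sub_rev _ _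
          _ ≤ r + p.2 := this
          _ = p.2 + r := by ring
      · exact hll p hp q hq
  obtain ⟨g, hg⟩ := weakIP_CKX hX l' hl'pair (by linarith : (0:ℝ) < ε / 2)
  refine ⟨g, fun a ha => ?_, fun p hp => (hg p (hmem2 p hp)).trans (by linarith)⟩
  obtain ⟨a', ha't, ha'ball⟩ := Set.mem_iUnion₂.mp (htcov ha)
  have h1 : ‖g - a'‖ ≤ r + ε / 2 := by simpa using hg (a', r) (hmem1 a' ha't)
  have h2 : ‖a - a'‖ < ε / 2 := by
    rw [Metric.mem_ball, dist_eq_norm] at ha'ball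
    exact ha'ball
  calc ‖g - a‖ = ‖(g - a') + (a' - a)‖ := by abel_nf
    _ ≤ ‖g - a'‖ + ‖a' - a‖ := norm_add_le _ _
    _ ≤ (r + ε / 2) + ε / 2 := by
        refine add_le_add h1 ?_
        rw [norm_sub_rev]
        linarith
    _ = r + ε := by ring

lemma exact_center (hX : IsL1Predual X) (A : Set C(K, X)) (hA : IsCompact A)
    (r s : ℝ) (hs : 0 ≤ s) (c : C(K, X))
    (hAA : ∀ a ∈ A, ∀ b ∈ A, ‖a - b‖ ≤ 2 * r) (hAc : ∀ a ∈ A, ‖a - c‖ ≤ r + s) :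
    ∃ y : C(K, X), (∀ a ∈ A, ‖y - a‖ ≤ r) ∧ ‖y - c‖ ≤ s := by
  set Q : ℕ → C(K, X) → Prop :=
    fun n x => (∀ a ∈ A, ‖x - a‖ ≤ r + (1/2) ^ n) ∧ ‖x - c‖ ≤ s + (1/2) ^ n with hQ
  have hpow : ∀ n : ℕ, (0:ℝ) < (1/2) ^ n := fun n => by positivity
  have hbase : ∃ x, Q 0 x := by
    obtain ⟨g, hg1, hg2⟩ := weakIP_compact hX A hA r hAA [(c, s)]
      (fun a ha p hp => by
        rw [List.mem_singleton] at hp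
        subst hp
        exact hAc a ha)
      (fun p hp q hq => by
        rw [List.mem_singleton] at hp hq
        subst hp; subst hq
        simp; linarith)
      one_pos
    exact ⟨g, fun a ha => by simpa using hg1 a ha,
      by simpa using hg2 (c, s) (List.mem_singleton.mpr rfl)⟩
  have hstep : ∀ n, ∀ x : C(K, X), Q n x →
      ∃ x', Q (n+1) x' ∧ ‖x' - x‖ ≤ (1/2) ^ n + (1/2) ^ (n+1) := by
    intro n x hx
    obtain ⟨hx1, hx2⟩ := hx
    obtain ⟨g, hg1, hg2⟩ := weakIP_compact hX A hA r hAA [(c, s), (x, (1/2)^n)]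
      (fun a ha p hp => by
        rcases List.mem_pair.mp hp with rfl | rfl
        · exact hAc a ha
        · simp only
          rw [norm_sub_rev]
          exact hx1 a ha)
      (fun p hp q hq => by
        rcases List.mem_pair.mp hp with rfl | rfl <;>
          rcases List.mem_pair.mp hq with rfl | rfl
        · simp; linarith
        · simp only
          rw [norm_sub_rev]
          exact hx2
        · simp only
          linarith [hx2]
        · simp)
      (hpow (n+1))
    refine ⟨g, ⟨fun a ha => hg1 a ha, ?_⟩, ?_⟩
    · simpa using hg2 (c, s) (by simp)
    · have := hg2 (x, (1/2)^n) (by simp)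
      simpa using this
  choose! f hf1 hf2 using hstep
  obtain ⟨x0, hx0⟩ := hbase
  set xs : ℕ → C(K, X) := fun n => Nat.rec x0 (fun n xn => f n xn) n with hxs
  have hQs : ∀ n, Q n (xs n) := by
    intro n
    induction n with
    | zero => exact hx0
    | succ n ih => exact hf1 n (xs n) ih
  have hdist : ∀ n, dist (xs n) (xs (n+1)) ≤ (3/2) * (1/2) ^ n := by
    intro n
    have h := hf2 n (xs n) (hQs n)
    rw [dist_comm, dist_eq_norm]
    calc ‖xs (n+1) - xs n‖ = ‖f n (xs n) - xs n‖ := rfl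
      _ ≤ (1/2) ^ n + (1/2) ^ (n+1) := h
      _ = (3/2) * (1/2) ^ n := by ring
  have hcauchy : CauchySeq xs :=
    cauchySeq_of_le_geometric (1/2) (3/2) (by norm_num) hdist
  obtain ⟨y, hy⟩ := cauchySeq_tendsto_of_complete hcauchy
  refine ⟨y, fun a ha => ?_, ?_⟩
  · refine le_of_tendsto_of_tendsto' ((hy.sub tendsto_const_nhds).norm) ?_
      (fun n => (hQs n).1 a ha)
    have : Tendsto (fun n : ℕ => r + (1/2) ^ n) atTop (𝓝 (r + 0)) :=
      tendsto_const_nhds.add (tendsto_pow_atTop_nhds_zero_of_lt_one (by norm_num) (by norm_num))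
    simpa using this
  · refine le_of_tendsto_of_tendsto' ((hy.sub tendsto_const_nhds).norm) ?_
      (fun n => (hQs n).2)
    have : Tendsto (fun n : ℕ => s + (1/2) ^ n) atTop (𝓝 (s + 0)) :=
      tendsto_const_nhds.add (tendsto_pow_atTop_nhds_zero_of_lt_one (by norm_num) (by norm_num))
    simpa using this

section Rad
variable {Y : Type*} [NormedAddCommGroup Y]

lemma rMax_bddAbove {F : Set Y} (hF : Bornology.IsBounded F) (v : Y) :
    BddAbove ((fun b => ‖v - b‖) '' F) := by
  obtain ⟨R, hR⟩ := hF.subset_closedBall v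
  refine ⟨R, ?_⟩
  rintro x ⟨b, hb, rfl⟩
  have h1 := hR hb
  rw [Metric.mem_closedBall] at h1
  show ‖v - b‖ ≤ R
  rw [← dist_eq_norm]
  rwa [dist_comm] at h1

lemma rMax_le {F : Set Y} (hne : F.Nonempty) {v : Y} {C : ℝ}
    (h : ∀ b ∈ F, ‖v - b‖ ≤ C) : rMax v F ≤ C :=
  csSup_le (hne.image _) (by rintro x ⟨b, hb, rfl⟩; exact h b hb)

lemma le_rMax {F : Set Y} (hF : Bornology.IsBounded F) {v b : Y} (hb : b ∈ F) :
    ‖v - b‖ ≤ rMax v F :=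
  le_csSup (rMax_bddAbove hF v) ⟨b, hb, rfl⟩

lemma rMax_nonneg {F : Set Y} (hne : F.Nonempty) (hF : Bornology.IsBounded F) (v : Y) :
    0 ≤ rMax v F := by
  obtain ⟨b, hb⟩ := hne
  exact (norm_nonneg _).trans (le_rMax hF hb)

lemma chebRad_le_rMax {F : Set Y} (hne : F.Nonempty) (hF : Bornology.IsBounded F) (v : Y) :
    chebRad Set.univ F ≤ rMax v F :=
  csInf_le ⟨0, by rintro x ⟨w, _, rfl⟩; exact rMax_nonneg hne hF w⟩
    ⟨v, Set.mem_univ v, rfl⟩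

lemma le_chebRad {F : Set Y} {C : ℝ} (h : ∀ v : Y, C ≤ rMax v F) :
    C ≤ chebRad Set.univ F :=
  le_csInf (⟨rMax 0 F, 0, Set.mem_univ 0, rfl⟩)
    (by rintro x ⟨w, _, rfl⟩; exact h w)

lemma chebRad_nonneg {F : Set Y} (hne : F.Nonempty) (hF : Bornology.IsBounded F) :
    0 ≤ chebRad Set.univ F :=
  le_chebRad fun v => rMax_nonneg hne hF v

lemma norm_sub_le_two_chebRad {F : Set Y} (hne : F.Nonempty) (hF : Bornology.IsBounded F)
    {a b : Y} (ha : a ∈ F) (hb : b ∈ F) : ‖a - b‖ ≤ 2 * chebRad Set.univ F := by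
  have h : ∀ v : Y, ‖a - b‖ / 2 ≤ rMax v F := by
    intro v
    have h1 : ‖a - b‖ ≤ ‖v - a‖ + ‖v - b‖ := by
      calc ‖a - b‖ = ‖(v - b) - (v - a)‖ := by abel_nf
        _ ≤ ‖v - b‖ + ‖v - a‖ := norm_sub_le _ _
        _ = ‖v - a‖ + ‖v - b‖ := by ring
    have h2 := le_rMax hF ha (v := v)
    have h3 := le_rMax hF hb (v := v)
    linarith
  have := le_chebRad h
  linarith

end Rad

variable {X : Type*} [NormedAddCommGroup X] [NormedSpace ℝ X] [CompleteSpace X]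
variable {K : Type*} [TopologicalSpace K] [CompactSpace K] [T2Space K]

lemma cent_nonempty_aux (hX : IsL1Predual X) (F : Set C(K, X)) (hne : F.Nonempty)
    (hF : IsCompact F) {v : C(K, X)} {s : ℝ} (hs : 0 ≤ s)
    (hv : ∀ a ∈ F, ‖a - v‖ ≤ chebRad Set.univ F + s) :
    ∃ y ∈ chebCent (Set.univ : Set C(K, X)) F, ‖y - v‖ ≤ s := by
  have hbd := hF.isBounded
  set R := chebRad Set.univ F with hR
  obtain ⟨y, hy1, hy2⟩ := exact_center hX F hF R s hs v
    (fun a ha b hb => norm_sub_le_two_chebRad hne hbd ha hb) hv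
  refine ⟨y, ⟨Set.mem_univ y, le_antisymm (rMax_le hne hy1) (chebRad_le_rMax hne hbd y)⟩, hy2⟩

theorem chebCent_CKX_of_isL1Predual' (hX : IsL1Predual X) :
    (∀ F : Set C(K, X), F.Nonempty → IsCompact F →
        (chebCent (Set.univ : Set C(K, X)) F).Nonempty) ∧
      ∀ F₁ F₂ : Set C(K, X), F₁.Nonempty → IsCompact F₁ → F₂.Nonempty → IsCompact F₂ →
        Metric.hausdorffDist (chebCent (Set.univ : Set C(K, X)) F₁)
            (chebCent (Set.univ : Set C(K, X)) F₂)
          ≤ 2 * Metric.hausdorffDist F₁ F₂ := by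
  have hex : ∀ F : Set C(K, X), F.Nonempty → IsCompact F →
      (chebCent (Set.univ : Set C(K, X)) F).Nonempty := by
    intro F hne hF
    obtain ⟨f₀, hf₀⟩ := hne
    have hne' : F.Nonempty := ⟨f₀, hf₀⟩
    obtain ⟨y, hy, -⟩ := cent_nonempty_aux hX F hne' hF (v := f₀)
      (s := chebRad Set.univ F) (chebRad_nonneg hne' hF.isBounded)
      (fun a ha => by
        have := norm_sub_le_two_chebRad hne' hF.isBounded ha hf₀
        linarith)
    exact ⟨y, hy⟩
  refine ⟨hex, ?_⟩
  intro F₁ F₂ hne₁ hF₁ hne₂ hF₂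
  set d := Metric.hausdorffDist F₁ F₂ with hd
  have hd0 : 0 ≤ d := Metric.hausdorffDist_nonneg
  have hetop : EMetric.hausdorffEdist F₁ F₂ ≠ ⊤ :=
    Metric.hausdorffEdist_ne_top_of_nonempty_of_bounded hne₁ hne₂ hF₁.isBounded hF₂.isBounded
  -- rMax comparison
  have hrm : ∀ (F G : Set C(K, X)), G.Nonempty → IsCompact G →
      EMetric.hausdorffEdist F G ≠ ⊤ → Bornology.IsBounded F → F.Nonempty →
      ∀ v, rMax v F ≤ rMax v G + Metric.hausdorffDist F G := by
    intro F G hneG hG htop hbdF hneF v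
    refine rMax_le hneF fun b hb => ?_
    have h1 : Metric.infDist b G ≤ Metric.hausdorffDist F G :=
      Metric.infDist_le_hausdorffDist_of_mem hb htop
    obtain ⟨g, hgG, hgdist⟩ := hG.exists_infDist_eq_dist hneG b
    have h2 : dist b g ≤ Metric.hausdorffDist F G := by rw [← hgdist]; exact h1
    have h3 : ‖v - b‖ ≤ ‖v - g‖ + ‖g - b‖ := by
      calc ‖v - b‖ = ‖(v - g) + (g - b)‖ := by abel_nf
        _ ≤ ‖v - g‖ + ‖g - b‖ := norm_add_le _ _
    have h4 : ‖g - b‖ = dist b g := by rw [dist_comm, dist_eq_norm]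
    have h5 := le_rMax hG.isBounded hgG (v := v)
    linarith
  have hradle : ∀ (F G : Set C(K, X)), F.Nonempty → IsCompact F → G.Nonempty → IsCompact G →
      chebRad Set.univ F ≤ chebRad Set.univ G + Metric.hausdorffDist F G := by
    intro F G hneF hF hneG hG
    have htop : EMetric.hausdorffEdist F G ≠ ⊤ :=
      Metric.hausdorffEdist_ne_top_of_nonempty_of_bounded hneF hneG hF.isBounded hG.isBounded
    have key : ∀ v, chebRad Set.univ F - Metric.hausdorffDist F G ≤ rMax v G := by
      intro v
      have h1 := hrm F G hneG hG htop hF.isBounded hneF v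
      have h2 := chebRad_le_rMax hneF hF.isBounded v
      linarith
    have := le_chebRad key
    linarith
  -- Main symmetric step
  have hstep : ∀ (F G : Set C(K, X)), F.Nonempty → IsCompact F → G.Nonempty → IsCompact G →
      ∀ v ∈ chebCent (Set.univ : Set C(K, X)) F,
      ∃ y ∈ chebCent (Set.univ : Set C(K, X)) G, dist v y ≤ 2 * Metric.hausdorffDist F G := by
    intro F G hneF hF hneG hG v hv
    have htopFG : EMetric.hausdorffEdist F G ≠ ⊤ :=
      Metric.hausdorffEdist_ne_top_of_nonempty_of_bounded hneF hneG hF.isBounded hG.isBounded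
    have htopGF : EMetric.hausdorffEdist G F ≠ ⊤ := by
      exact Metric.hausdorffEdist_ne_top_of_nonempty_of_bounded hneG hneF hG.isBounded hF.isBounded
    set dd := Metric.hausdorffDist F G with hdd
    have hdd0 : 0 ≤ dd := Metric.hausdorffDist_nonneg
    obtain ⟨-, hvrad⟩ := hv
    obtain ⟨y, hy, hyv⟩ := cent_nonempty_aux hX G hneG hG (v := v) (s := 2 * dd)
      (by linarith)
      (fun a ha => by
        have h1 : ‖a - v‖ ≤ rMax v G := by
          rw [norm_sub_rev]; exact le_rMax hG.isBounded ha
        have h2 : rMax v G ≤ rMax v F + Metric.hausdorffDist G F :=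
          hrm G F hneF hF htopGF hG.isBounded hneG v
        have h3 : Metric.hausdorffDist G F = dd := by
          rw [hdd, Metric.hausdorffDist_comm]
        have h4 : rMax v F = chebRad Set.univ F := hvrad
        have h5 := hradle F G hneF hF hneG hG
        linarith)
    refine ⟨y, hy, ?_⟩
    rw [dist_eq_norm, norm_sub_rev]
    exact hyv
  refine Metric.hausdorffDist_le_of_mem_dist (by linarith) ?_ ?_
  · intro v hv
    exact hstep F₁ F₂ hne₁ hF₁ hne₂ hF₂ v hv
  · intro v hv
    obtain ⟨y, hy, hd'⟩ := hstep F₂ F₁ hne₂ hF₂ hne₁ hF₁ v hv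
    exact ⟨y, hy, by rwa [Metric.hausdorffDist_comm] at hd'⟩

end ChebAux

/-- For an `L₁`-predual `X` and compact Hausdorff `K`, the space `C(K,X)` admits Chebyshev
centers for nonempty compact sets and the Chebyshev-center map is `2`-Lipschitz on them. -/
theorem chebCent_CKX_of_isL1Predual {X : Type*} [NormedAddCommGroup X] [NormedSpace ℝ X]
    [CompleteSpace X] (hX : IsL1Predual X) (K : Type*) [TopologicalSpace K] [CompactSpace K]
    [T2Space K] :
    (∀ F : Set C(K, X), F.Nonempty → IsCompact F →
        (chebCent (Set.univ : Set C(K, X)) F).Nonempty) ∧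
      ∀ F₁ F₂ : Set C(K, X), F₁.Nonempty → IsCompact F₁ → F₂.Nonempty → IsCompact F₂ →
        Metric.hausdorffDist (chebCent (Set.univ : Set C(K, X)) F₁)
            (chebCent (Set.univ : Set C(K, X)) F₂)
          ≤ 2 * Metric.hausdorffDist F₁ F₂ :=
  ChebAux.chebCent_CKX_of_isL1Predual' hX
end
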